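/- arXiv:2010.12052 — 7 statements merged into one kernel-verified Lean document; each statement's English description precedes it below -/
import Mathlib

section
/- There exists an instance of 1|s_j,B|C_max (a finite job set J with capacity B, sizes s_j and processing times p_j as above) with the following property: letting m* denote the minimum number of batches over all capacity-feasible schedules of the instance, every capacity-feasible schedule that uses exactly m* batches has makespan strictly greater than the optimal makespan. Hence restricting the number of batches to the minimum feasible number can exclude all optimal schedules. -/
/-!
Take capacity 3, two short jobs (time 1) of size 2 and two long jobs (time 3) of size 1.
The two short jobs never fit together, so two batches are needed, and a two-batch schedule
must pair each long job with a short one: makespan 6. Putting both long jobs into one batch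
leaves room for neither short job, so this costs a third batch but gives makespan 3 + 1 + 1 = 5.
-/

open Finset

namespace Finpartition

variable {α : Type*} [DecidableEq α] {s : Finset α} (P : Finpartition s)

lemma sum_le_of_forall_part_eq {w : α → ℕ} {B : ℕ}
    (hP : ∀ S ∈ P.parts, ∑ j ∈ S, w j ≤ B) {a : α} (ha : a ∈ s) {T : Finset α}
    (hT : T ⊆ s) (h : ∀ b ∈ T, P.part b = P.part a) : ∑ j ∈ T, w j ≤ B :=
  (sum_le_sum_of_subset fun b hb ↦ (P.mem_part_iff_part_eq_part (hT hb) ha).2 (h b hb)).trans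
    (hP _ (P.part_mem.2 ha))

lemma card_le_card_parts_of_injOn {T : Finset α} (hT : T ⊆ s) (hinj : Set.InjOn P.part T) :
    #T ≤ #P.parts :=
  card_le_card_of_injOn P.part (fun _ ha ↦ P.part_mem.2 (hT ha)) hinj

lemma sum_le_sum_sup_parts_of_injOn (p : α → ℕ) {T : Finset α} (hT : T ⊆ s)
    (hinj : Set.InjOn P.part T) : ∑ j ∈ T, p j ≤ ∑ S ∈ P.parts, S.sup p :=
  calc ∑ j ∈ T, p j
      ≤ ∑ j ∈ T, (P.part j).sup p := sum_le_sum fun _ hj ↦ le_sup (P.mem_part (hT hj))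
    _ = ∑ S ∈ T.image P.part, S.sup p := (sum_image hinj).symm
    _ ≤ ∑ S ∈ P.parts, S.sup p :=
        sum_le_sum_of_subset fun _ hS ↦ by
          obtain ⟨j, hj, rfl⟩ := mem_image.1 hS
          exact P.part_mem.2 (hT hj)

end Finpartition

def exampleSize : Fin 4 → ℕ := ![2, 2, 1, 1]

def exampleTime : Fin 4 → ℕ := ![1, 1, 3, 3]

def twoBatchSchedule : Finpartition (univ : Finset (Fin 4)) :=
  .ofExistsUnique {{0, 2}, {1, 3}} (by decide) (by unfold ExistsUnique; decide) (by decide)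

def threeBatchSchedule : Finpartition (univ : Finset (Fin 4)) :=
  .ofExistsUnique {{0}, {1}, {2, 3}} (by decide) (by unfold ExistsUnique; decide) (by decide)

section FeasibleSchedule

variable (P : Finpartition (univ : Finset (Fin 4)))
  (hP : ∀ S ∈ P.parts, ∑ j ∈ S, exampleSize j ≤ 3)
include hP

lemma part_zero_ne_part_one : P.part 0 ≠ P.part 1 := by
  intro h
  have hsum := P.sum_le_of_forall_part_eq hP (mem_univ 0) (subset_univ {0, 1}) (by simp [h])
  exact absurd hsum (by decide)

lemma part_ne_part_two_of_part_two_eq_part_three (h23 : P.part 2 = P.part 3) {a : Fin 4}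
    (ha : a = 0 ∨ a = 1) : P.part a ≠ P.part 2 := by
  intro h
  have hsum := P.sum_le_of_forall_part_eq hP (mem_univ 2) (subset_univ {a, 2, 3})
    (by simp [h, h23])
  rcases ha with rfl | rfl <;> exact absurd hsum (by decide)

lemma injOn_long_jobs_or_injOn_three_jobs :
    Set.InjOn P.part ↑({2, 3} : Finset (Fin 4)) ∨
      Set.InjOn P.part ↑({0, 1, 2} : Finset (Fin 4)) := by
  by_cases h23 : P.part 2 = P.part 3
  · have h02 := part_ne_part_two_of_part_two_eq_part_three P hP h23 (.inl rfl)
    have h12 := part_ne_part_two_of_part_two_eq_part_three P hP h23 (.inr rfl)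
    right
    simp [Set.injOn_insert, Ne.symm (part_zero_ne_part_one P hP), h12, Ne.symm h02]
  · left
    simp [Set.injOn_insert, h23]

lemma two_le_card_parts : 2 ≤ #P.parts :=
  P.card_le_card_parts_of_injOn (T := {0, 1}) (subset_univ _)
    (by simp [Set.injOn_insert, part_zero_ne_part_one P hP])

lemma five_le_makespan : 5 ≤ ∑ S ∈ P.parts, S.sup exampleTime := by
  rcases injOn_long_jobs_or_injOn_three_jobs P hP with h | h
  · exact le_trans (by decide) (P.sum_le_sum_sup_parts_of_injOn exampleTime (subset_univ _) h)
  · exact P.sum_le_sum_sup_parts_of_injOn exampleTime (subset_univ _) h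

lemma six_le_makespan_of_card_parts_eq_two (hcard : #P.parts = 2) :
    6 ≤ ∑ S ∈ P.parts, S.sup exampleTime := by
  rcases injOn_long_jobs_or_injOn_three_jobs P hP with h | h
  · exact P.sum_le_sum_sup_parts_of_injOn exampleTime (subset_univ _) h
  · have hcard3 := P.card_le_card_parts_of_injOn (subset_univ _) h
    rw [hcard] at hcard3
    exact absurd hcard3 (by decide)

end FeasibleSchedule

/-- There exists an instance of `1|s_j,B|C_max` such that, letting `mstar` be the minimum
number of batches over all capacity-feasible schedules, every capacity-feasible schedule
using exactly `mstar` batches has makespan strictly greater than the optimal makespan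
`Mopt`. Schedules are `Finpartition`s of the job set; capacity-feasibility of a schedule
means every batch `S` satisfies `∑ j ∈ S, s j ≤ B`; the makespan of a schedule is
`∑ S ∈ P.parts, S.sup p`. -/
theorem min_batches_can_exclude_optimum :
    ∃ (n B : ℕ) (_ : 1 ≤ n) (_ : 1 ≤ B) (s p : Fin n → ℕ)
      (_ : ∀ j, 1 ≤ s j ∧ s j ≤ B) (_ : ∀ j, 1 ≤ p j) (mstar Mopt : ℕ),
      IsLeast {m : ℕ | ∃ P : Finpartition (univ : Finset (Fin n)),
          (∀ S ∈ P.parts, ∑ j ∈ S, s j ≤ B) ∧ P.parts.card = m} mstar ∧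
      IsLeast {M : ℕ | ∃ P : Finpartition (univ : Finset (Fin n)),
          (∀ S ∈ P.parts, ∑ j ∈ S, s j ≤ B) ∧ ∑ S ∈ P.parts, S.sup p = M} Mopt ∧
      ∀ P : Finpartition (univ : Finset (Fin n)),
        (∀ S ∈ P.parts, ∑ j ∈ S, s j ≤ B) → P.parts.card = mstar →
        Mopt < ∑ S ∈ P.parts, S.sup p := by
  refine ⟨4, 3, by decide, by decide, exampleSize, exampleTime, by decide, by decide, 2, 5,
    ⟨⟨twoBatchSchedule, by decide, by decide⟩, ?_⟩,
    ⟨⟨threeBatchSchedule, by decide, by decide⟩, ?_⟩, ?_⟩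
  · rintro m ⟨P, hP, rfl⟩
    exact two_le_card_parts P hP
  · rintro M ⟨P, hP, rfl⟩
    exact five_le_makespan P hP
  · intro P hP hcard
    exact six_le_makespan_of_card_parts_eq_two P hP hcard
end

section
/- Let n = |J| and K = {1,…,n}. A feasible solution of (MILP1) consists of x : J × K → {0,1}, y : K → {0,1} and C : K → ℝ satisfying: Σ_{k∈K} x_{jk} = 1 for every j ∈ J; Σ_{j∈J} s_j x_{jk} ≤ B·y_k for every k ∈ K; and C_k ≥ p_j x_{jk} for every j ∈ J and k ∈ K. Then the minimum of Σ_{k∈K} C_k over all feasible solutions of (MILP1) is attained and equals the optimal makespan of the instance. -/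
/-!
A feasible solution of (MILP1) is, up to the values of `y` and `C`, an assignment `b` of jobs to
batch indices, with `x j = Pi.single (b j) 1`. The nonempty fibres of `b` form a capacity-feasible
partition of the jobs, and the objective is at least its makespan because `C k` bounds the
processing time of every job in the fibre over `k`; also `C k ≥ 0`, by the constraint for job `k`,
since jobs and batch indices are both `Fin n`. Conversely, a partition has at most `n` parts, so
it can be encoded by an assignment into `Fin n`, and taking `y = 1` and `C k` the processing time
of the fibre over `k` realises its makespan exactly.
-/

open Finset

theorem Fintype.exists_eq_piSingle_of_sum_eq_one {κ : Type*} [Fintype κ] [DecidableEq κ]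
    (x : κ → ℕ) (h : ∑ k, x k = 1) : ∃ k, x = Pi.single k 1 := by
  obtain ⟨k, hk⟩ := (Finsupp.sum_eq_one_iff (Finsupp.equivFunOnFinite.symm x)).1
    (by simpa [Finsupp.sum_fintype] using h)
  exact ⟨k, by simpa [← Finsupp.single_eq_pi_single] using congrArg (⇑) hk⟩

theorem Nat.cast_finsetSup_le {ι R : Type*} [Semiring R] [LinearOrder R] [IsOrderedRing R]
    (S : Finset ι) (f : ι → ℕ) {c : R} (hc : 0 ≤ c) (hf : ∀ i ∈ S, (f i : R) ≤ c) :
    ((S.sup f : ℕ) : R) ≤ c := by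
  rcases S.eq_empty_or_nonempty with rfl | hS
  · simpa using hc
  · obtain ⟨i, hi, hsup⟩ := S.exists_mem_eq_sup hS f
    exact hsup ▸ hf i hi

section Assignment

variable {ι κ : Type*} [Fintype ι] [DecidableEq κ]

theorem sum_mul_piSingle_eq_sum_fiber (b : ι → κ) (s : ι → ℕ) (k : κ) :
    ∑ j, s j * (Pi.single (b j) 1 : κ → ℕ) k = ∑ j ∈ univ.filter (b · = k), s j := by
  simp [Pi.single_apply, sum_filter, eq_comm]

theorem mul_piSingle_le_sup_fiber (b : ι → κ) (p : ι → ℕ) (j : ι) (k : κ) :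
    p j * (Pi.single (b j) 1 : κ → ℕ) k ≤ (univ.filter (b · = k)).sup p := by
  by_cases h : b j = k
  · subst h
    simpa using le_sup (f := p) (by simp : j ∈ univ.filter (b · = b j))
  · simp [Ne.symm h]

end Assignment

namespace Finpartition

variable {ι κ : Type*} [Fintype ι] [DecidableEq ι] [DecidableEq κ]

theorem exists_fun_part_eq_fiber_of_card_le [Fintype κ] (P : Finpartition (univ : Finset ι))
    (h : Fintype.card ι ≤ Fintype.card κ) :
    ∃ b : ι → κ, ∀ i, P.part i = univ.filter (b · = b i) := by
  have hcard : Fintype.card P.parts ≤ Fintype.card κ := by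
    simpa using P.card_parts_le_card.trans h
  obtain ⟨e⟩ := Function.Embedding.nonempty_of_card_le hcard
  refine ⟨fun i => e ⟨P.part i, P.part_mem.2 (mem_univ i)⟩, fun i => ?_⟩
  ext j
  simp [e.injective.eq_iff, P.mem_part_iff_part_eq_part (mem_univ j) (mem_univ i)]

theorem exists_part_eq_fiber (b : ι → κ) :
    ∃ P : Finpartition (univ : Finset ι), ∀ i, P.part i = univ.filter (b · = b i) :=
  ⟨ofSetoid (Setoid.ker b), fun i => by ext j; simp [mem_part_ofSetoid_iff_rel, eq_comm]⟩

variable {P : Finpartition (univ : Finset ι)} {b : ι → κ}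

theorem parts_eq_image_fiber (hb : ∀ i, P.part i = univ.filter (b · = b i)) :
    P.parts = (univ.image b).image fun k => univ.filter (b · = k) := by
  ext S
  simp only [mem_image, mem_univ, true_and, exists_exists_eq_and]
  constructor
  · intro hS
    obtain ⟨i, hi⟩ := P.nonempty_of_mem_parts hS
    exact ⟨i, hb i ▸ P.part_eq_of_mem hS hi⟩
  · rintro ⟨i, rfl⟩
    exact hb i ▸ P.part_mem.2 (mem_univ i)

theorem forall_parts_iff_forall_fiber (hb : ∀ i, P.part i = univ.filter (b · = b i))
    {q : Finset ι → Prop} (hq : q ∅) : (∀ S ∈ P.parts, q S) ↔ ∀ k, q (univ.filter (b · = k)) := by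
  simp only [parts_eq_image_fiber hb, forall_mem_image, mem_univ, forall_const]
  refine ⟨fun h k => ?_, fun h i => h (b i)⟩
  by_cases hk : ∃ i, b i = k
  · obtain ⟨i, rfl⟩ := hk
    exact @h i
  · rwa [filter_eq_empty_iff.2 fun i _ hi => hk ⟨i, hi⟩]

theorem sum_parts_eq_sum_fiber [Fintype κ] {M : Type*} [AddCommMonoid M]
    (hb : ∀ i, P.part i = univ.filter (b · = b i)) (f : Finset ι → M) (hf : f ∅ = 0) :
    ∑ S ∈ P.parts, f S = ∑ k, f (univ.filter (b · = k)) := by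
  rw [parts_eq_image_fiber hb, sum_image]
  · refine sum_subset (subset_univ _) fun k _ hk => ?_
    rw [filter_eq_empty_iff.2 fun j _ (hj : b j = k) => hk (hj ▸ mem_image_of_mem b (mem_univ j)),
      hf]
  · simp only [coe_image, coe_univ, Set.image_univ, Set.InjOn, Set.mem_range]
    rintro _ ⟨i, rfl⟩ _ _ h
    simpa using (Finset.ext_iff.1 h i).1 (by simp)

end Finpartition

theorem MILP1_correct_general (n B : ℕ)
    (s p : Fin n → ℕ)
    (Mopt : ℕ)
    (hopt : IsLeast {M : ℕ | ∃ P : Finpartition (univ : Finset (Fin n)),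
        (∀ S ∈ P.parts, ∑ j ∈ S, s j ≤ B) ∧ ∑ S ∈ P.parts, S.sup p = M} Mopt) :
    IsLeast {r : ℝ | ∃ (x : Fin n → Fin n → ℕ) (y : Fin n → ℕ) (C : Fin n → ℝ),
        (∀ j k, x j k ≤ 1) ∧ (∀ k, y k ≤ 1) ∧
        (∀ j, ∑ k, x j k = 1) ∧
        (∀ k, ∑ j, s j * x j k ≤ B * y k) ∧
        (∀ j k, ((p j * x j k : ℕ) : ℝ) ≤ C k) ∧
        ∑ k, C k = r} (Mopt : ℝ) := by
  obtain ⟨⟨P, hPcap, rfl⟩, hmin⟩ := hopt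
  constructor
  · obtain ⟨b, hb⟩ := P.exists_fun_part_eq_fiber_of_card_le le_rfl
    have hcap := (P.forall_parts_iff_forall_fiber hb (by simp)).1 hPcap
    refine ⟨fun j => (Pi.single (b j) 1 : Fin n → ℕ), 1, fun k => ((univ.filter (b · = k)).sup p : ℕ),
      fun j k => ?_, fun _ => le_rfl, fun j => by simp, fun k => ?_,
      fun j k => Nat.cast_le.2 (mul_piSingle_le_sup_fiber b p j k), ?_⟩
    · by_cases h : b j = k <;> simp [h]
    · simpa [sum_mul_piSingle_eq_sum_fiber] using hcap k
    · rw [P.sum_parts_eq_sum_fiber hb (·.sup p) rfl, Nat.cast_sum]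
  · rintro r ⟨x, y, C, -, hy, hx, hcap, hC, rfl⟩
    choose b hb using fun j => Fintype.exists_eq_piSingle_of_sum_eq_one (x j) (hx j)
    obtain rfl : x = fun j => Pi.single (b j) 1 := funext hb
    obtain ⟨Q, hQ⟩ := Finpartition.exists_part_eq_fiber b
    have hQcap : ∀ S ∈ Q.parts, ∑ j ∈ S, s j ≤ B := by
      refine (Q.forall_parts_iff_forall_fiber hQ (by simp)).2 fun k => ?_
      rw [← sum_mul_piSingle_eq_sum_fiber]
      exact (hcap k).trans (mul_le_of_le_one_right B.zero_le (hy k))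
    calc ((∑ S ∈ P.parts, S.sup p : ℕ) : ℝ)
        ≤ ((∑ S ∈ Q.parts, S.sup p : ℕ) : ℝ) := mod_cast hmin ⟨Q, hQcap, rfl⟩
      _ = ∑ k, (((univ.filter (b · = k)).sup p : ℕ) : ℝ) := by
          rw [Q.sum_parts_eq_sum_fiber hQ (·.sup p) rfl, Nat.cast_sum]
      _ ≤ ∑ k, C k := sum_le_sum fun k _ =>
          Nat.cast_finsetSup_le _ _ ((Nat.cast_nonneg _).trans (hC k k))
            fun j hj => (mem_filter.1 hj).2 ▸ by simpa using hC j (b j)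

/-- Correctness of the formulation (MILP1) of Melouk et al. (with batch index set
`K = {1,…,n}`, `n` the number of jobs): the minimum of `∑ k, C k` over all feasible
solutions `(x, y, C)` — where `x : J × K → {0,1}`, `y : K → {0,1}`, `C : K → ℝ` satisfy
the assignment constraints `∑ k, x j k = 1`, the capacity constraints
`∑ j, s j * x j k ≤ B * y k`, and the processing-time constraints `p j * x j k ≤ C k` —
is attained and equals the optimal makespan `Mopt` of the instance. -/
theorem MILP1_correct (n B : ℕ) (hn : 1 ≤ n) (hB : 1 ≤ B)
    (s p : Fin n → ℕ) (hs : ∀ j, 1 ≤ s j ∧ s j ≤ B) (hp : ∀ j, 1 ≤ p j)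
    (Mopt : ℕ)
    (hopt : IsLeast {M : ℕ | ∃ P : Finpartition (univ : Finset (Fin n)),
        (∀ S ∈ P.parts, ∑ j ∈ S, s j ≤ B) ∧ ∑ S ∈ P.parts, S.sup p = M} Mopt) :
    IsLeast {r : ℝ | ∃ (x : Fin n → Fin n → ℕ) (y : Fin n → ℕ) (C : Fin n → ℝ),
        (∀ j k, x j k ≤ 1) ∧ (∀ k, y k ≤ 1) ∧
        (∀ j, ∑ k, x j k = 1) ∧
        (∀ k, ∑ j, s j * x j k ≤ B * y k) ∧
        (∀ j k, ((p j * x j k : ℕ) : ℝ) ≤ C k) ∧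
        ∑ k, C k = r} (Mopt : ℝ) :=
  MILP1_correct_general n B s p Mopt hopt
end

section
/- Assume the jobs are indexed 1, …, n so that p_1 ≤ p_2 ≤ … ≤ p_n. A feasible solution of (MILP1+) consists of x_{jk} ∈ {0,1} for all pairs 1 ≤ j ≤ k ≤ n satisfying: Σ_{k : k ≥ j} x_{jk} = 1 for every j, and Σ_{j : j ≤ k} s_j x_{jk} ≤ B·x_{kk} for every k. Then the minimum of Σ_{k=1}^{n} p_k x_{kk} over all feasible solutions of (MILP1+) is attained and equals the optimal makespan of the instance. -/
/-!
With `p` monotone, a batch costs the processing time of its last job. Label every batch by its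
last job and let `f j` be the label of the batch of job `j`: then `j ≤ f j`, `f ∘ f = f`, and
`x j k = [f j = k]` is a solution of (MILP1+) whose objective is the sum of `p k` over the labels
`k`, i.e. the makespan. Conversely the row constraints make every solution such a matrix on
`j ≤ k`, and because sizes are positive the capacity constraints force `x k k = 1` for every
label `k` in use; the fibres of `f` then form a schedule of makespan at most the objective.
-/

open Finset

theorem IsLeast.of_exists_le_of_exists_le {α : Type*} [PartialOrder α] {S T : Set α} {a : α}
    (ha : IsLeast S a) (hST : ∀ x ∈ S, ∃ y ∈ T, y ≤ x) (hTS : ∀ y ∈ T, ∃ x ∈ S, x ≤ y) :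
    IsLeast T a := by
  have hlower : a ∈ lowerBounds T := fun y hy ↦
    let ⟨x, hx, hxy⟩ := hTS y hy
    (ha.2 hx).trans hxy
  obtain ⟨b, hb, hba⟩ := hST a ha.1
  exact ⟨le_antisymm hba (hlower hb) ▸ hb, hlower⟩

theorem Finset.exists_eq_ite_of_sum_eq_one {α : Type*} [DecidableEq α] {t : Finset α}
    {g : α → ℕ} (hle : ∀ a ∈ t, g a ≤ 1) (hsum : ∑ a ∈ t, g a = 1) :
    ∃ a ∈ t, ∀ b ∈ t, g b = if a = b then 1 else 0 := by
  obtain ⟨a, ha, hga⟩ := exists_ne_zero_of_sum_ne_zero (hsum ▸ one_ne_zero)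
  have hga : g a = 1 := by have := hle a ha; omega
  have hrest : ∀ b ∈ t.erase a, g b = 0 := by
    rw [← sum_eq_zero_iff]
    have := add_sum_erase t g ha
    omega
  refine ⟨a, ha, fun b hb ↦ ?_⟩
  split_ifs with hab
  · exact hab ▸ hga
  · exact hrest b (mem_erase.2 ⟨Ne.symm hab, hb⟩)

theorem Finset.filter_apply_eq_eq_empty {α : Type*} [Fintype α] [DecidableEq α] {f : α → α}
    (hf : ∀ a, f (f a) = f a) {k : α} (hk : f k ≠ k) : univ.filter (fun j ↦ f j = k) = ∅ :=
  filter_false_of_mem fun j _ hj ↦ hk (hj ▸ hf j)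

variable {ι : Type*} [Fintype ι] [LinearOrder ι]

/-- Feasibility for (MILP1+). Only the entries `x j k` with `j ≤ k` are variables of the model;
the others are ignored. -/
def IsMILP1plusSolution (s : ι → ℕ) (B : ℕ) (x : ι → ι → ℕ) : Prop :=
  (∀ j k : ι, j ≤ k → x j k ≤ 1) ∧
  (∀ j : ι, ∑ k ∈ univ.filter (fun k ↦ j ≤ k), x j k = 1) ∧
  (∀ k : ι, ∑ j ∈ univ.filter (fun j ↦ j ≤ k), s j * x j k ≤ B * x k k)

/-- Job `j` goes to the batch `f j`, and every batch is labelled by its last job. -/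
structure IsBatchAssignment (s : ι → ℕ) (B : ℕ) (f : ι → ι) : Prop where
  le_apply : ∀ j, j ≤ f j
  apply_apply : ∀ j, f (f j) = f j
  sum_fiber_le : ∀ k, ∑ j ∈ univ.filter (fun j ↦ f j = k), s j ≤ B

def assignmentMatrix (f : ι → ι) (j k : ι) : ℕ := if f j = k then 1 else 0

section Assignment

variable {s : ι → ℕ} {B : ℕ} {f : ι → ι}

theorem sum_mul_assignmentMatrix (hf : ∀ j, j ≤ f j) (w : ι → ℕ) (k : ι) :
    ∑ j ∈ univ.filter (fun j ↦ j ≤ k), w j * assignmentMatrix f j k =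
      ∑ j ∈ univ.filter (fun j ↦ f j = k), w j := by
  simp only [assignmentMatrix, mul_ite, mul_one, mul_zero]
  rw [← sum_filter, filter_filter]
  congr 1
  ext j
  simp only [mem_filter, mem_univ, true_and, and_iff_right_iff_imp]
  exact fun hj ↦ hj ▸ hf j

theorem sum_mul_assignmentMatrix_diag (p : ι → ℕ) :
    ∑ k, p k * assignmentMatrix f k k = ∑ k ∈ univ.filter (fun k ↦ f k = k), p k := by
  simp [assignmentMatrix, mul_ite, sum_filter]

theorem IsBatchAssignment.isMILP1plusSolution (hf : IsBatchAssignment s B f) :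
    IsMILP1plusSolution s B (assignmentMatrix f) := by
  refine ⟨fun j k _ ↦ ?_, fun j ↦ ?_, fun k ↦ ?_⟩
  · unfold assignmentMatrix; split_ifs <;> simp
  · simp [assignmentMatrix, sum_ite_eq, hf.le_apply j]
  · rw [sum_mul_assignmentMatrix hf.le_apply]
    by_cases hk : f k = k
    · simpa [assignmentMatrix, hk] using hf.sum_fiber_le k
    · simp [filter_apply_eq_eq_empty hf.apply_apply hk]

theorem IsMILP1plusSolution.exists_isBatchAssignment {x : ι → ι → ℕ}
    (hx : IsMILP1plusSolution s B x) (hs : ∀ j, 1 ≤ s j) :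
    ∃ f, IsBatchAssignment s B f ∧ ∀ j k, j ≤ k → x j k = assignmentMatrix f j k := by
  obtain ⟨hx01, hrow, hcap⟩ := hx
  have hrow' (j : ι) := exists_eq_ite_of_sum_eq_one
    (fun k hk ↦ hx01 j k (mem_filter.1 hk).2) (hrow j)
  choose f hf_le hf_eq using hrow'
  replace hf_le (j : ι) : j ≤ f j := (mem_filter.1 (hf_le j)).2
  have hx_eq (j k : ι) (hjk : j ≤ k) : x j k = assignmentMatrix f j k :=
    hf_eq j k (by simpa using hjk)
  have hcap' (k : ι) : ∑ j ∈ univ.filter (fun j ↦ f j = k), s j ≤ B * x k k := by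
    rw [← sum_mul_assignmentMatrix hf_le]
    refine le_of_eq_of_le (sum_congr rfl fun j hj ↦ ?_) (hcap k)
    rw [hx_eq j k (mem_filter.1 hj).2]
  -- a nonempty batch has positive load, so the capacity constraint forces it to be opened
  have hf_idem (j : ι) : f (f j) = f j := by
    have hopen : 1 ≤ B * x (f j) (f j) :=
      (hs j).trans <| (single_le_sum (fun _ _ ↦ Nat.zero_le _) (by simp)).trans (hcap' (f j))
    rw [hx_eq _ _ le_rfl, assignmentMatrix] at hopen
    by_contra hne
    simp [hne] at hopen
  refine ⟨f, ⟨hf_le, hf_idem, fun k ↦ (hcap' k).trans ?_⟩, hx_eq⟩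
  simpa using Nat.mul_le_mul_left B (hx01 k k le_rfl)

theorem IsBatchAssignment.exists_finpartition (hf : IsBatchAssignment s B f) {p : ι → ℕ}
    (hp : Monotone p) :
    ∃ P : Finpartition (univ : Finset ι), (∀ S ∈ P.parts, ∑ j ∈ S, s j ≤ B) ∧
      ∑ S ∈ P.parts, S.sup p ≤ ∑ k ∈ univ.filter (fun k ↦ f k = k), p k := by
  classical
  set fiber : ι → Finset ι := fun k ↦ univ.filter (fun j ↦ f j = k)
  set P : Finpartition (univ : Finset ι) := Finpartition.ofSetoid (Setoid.ker f)
  have hparts : P.parts ⊆ (univ.filter (fun k ↦ f k = k)).image fiber := by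
    intro S hS
    simp only [P, Finpartition.ofSetoid, Finpartition.ofSetSetoid, Setoid.ker_def, mem_image,
      mem_univ, true_and] at hS
    obtain ⟨a, rfl⟩ := hS
    refine mem_image.2 ⟨f a, by simp [hf.apply_apply], ?_⟩
    ext b
    simp [fiber, eq_comm]
  refine ⟨P, fun S hS ↦ ?_, ?_⟩
  · obtain ⟨k, -, rfl⟩ := mem_image.1 (hparts hS)
    exact hf.sum_fiber_le k
  · calc ∑ S ∈ P.parts, S.sup p
        ≤ ∑ S ∈ (univ.filter (fun k ↦ f k = k)).image fiber, S.sup p :=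
          sum_le_sum_of_subset hparts
      _ ≤ ∑ k ∈ univ.filter (fun k ↦ f k = k), (fiber k).sup p :=
          sum_image_le_of_nonneg fun _ _ ↦ Nat.zero_le _
      _ ≤ ∑ k ∈ univ.filter (fun k ↦ f k = k), p k := by
          refine sum_le_sum fun k _ ↦ Finset.sup_le fun j hj ↦ hp ?_
          exact (mem_filter.1 hj).2 ▸ hf.le_apply j

end Assignment

namespace Finpartition

variable (P : Finpartition (univ : Finset ι))

def lastOfPart (j : ι) : ι := (P.part j).max' (P.part_nonempty.2 (mem_univ j))

theorem le_lastOfPart (j : ι) : j ≤ P.lastOfPart j :=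
  le_max' _ j (P.mem_part (mem_univ j))

theorem part_lastOfPart (j : ι) : P.part (P.lastOfPart j) = P.part j :=
  P.part_eq_of_mem (P.part_mem.2 (mem_univ j)) (max'_mem _ _)

theorem lastOfPart_eq_lastOfPart_iff {i j : ι} :
    P.lastOfPart i = P.lastOfPart j ↔ P.part i = P.part j := by
  refine ⟨fun h ↦ ?_, fun h ↦ ?_⟩
  · rw [← P.part_lastOfPart i, h, P.part_lastOfPart]
  · unfold lastOfPart; congr 1

theorem lastOfPart_lastOfPart (j : ι) : P.lastOfPart (P.lastOfPart j) = P.lastOfPart j :=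
  (P.lastOfPart_eq_lastOfPart_iff).2 (P.part_lastOfPart j)

theorem filter_lastOfPart_eq {k : ι} (hk : P.lastOfPart k = k) :
    univ.filter (fun j ↦ P.lastOfPart j = k) = P.part k := by
  ext j
  conv_lhs => rw [← hk]
  simp [lastOfPart_eq_lastOfPart_iff, P.mem_part_iff_part_eq_part (mem_univ j) (mem_univ k)]

variable {s : ι → ℕ} {B : ℕ}

theorem isBatchAssignment_lastOfPart (hP : ∀ S ∈ P.parts, ∑ j ∈ S, s j ≤ B) :
    IsBatchAssignment s B P.lastOfPart := by
  refine ⟨P.le_lastOfPart, P.lastOfPart_lastOfPart, fun k ↦ ?_⟩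
  by_cases hk : P.lastOfPart k = k
  · rw [P.filter_lastOfPart_eq hk]
    exact hP _ (P.part_mem.2 (mem_univ k))
  · simp [filter_apply_eq_eq_empty P.lastOfPart_lastOfPart hk]

theorem sum_filter_lastOfPart_le (p : ι → ℕ) :
    ∑ k ∈ univ.filter (fun k ↦ P.lastOfPart k = k), p k ≤ ∑ S ∈ P.parts, S.sup p := by
  have hinj : Set.InjOn P.part (univ.filter (fun k ↦ P.lastOfPart k = k)) := by
    intro k hk k' hk' h
    simp only [coe_filter, mem_univ, true_and, Set.mem_ofPred_eq] at hk hk'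
    rw [← hk, ← hk', P.lastOfPart_eq_lastOfPart_iff, h]
  calc ∑ k ∈ univ.filter (fun k ↦ P.lastOfPart k = k), p k
      ≤ ∑ k ∈ univ.filter (fun k ↦ P.lastOfPart k = k), (P.part k).sup p :=
        sum_le_sum fun k _ ↦ le_sup (P.mem_part (mem_univ k))
    _ = ∑ S ∈ (univ.filter (fun k ↦ P.lastOfPart k = k)).image P.part, S.sup p :=
        (sum_image hinj).symm
    _ ≤ ∑ S ∈ P.parts, S.sup p :=
        sum_le_sum_of_subset (image_subset_iff.2 fun k _ ↦ P.part_mem.2 (mem_univ k))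

end Finpartition

theorem MILP1plus_correct_general (n B : ℕ)
    (s p : Fin n → ℕ) (hs : ∀ j, 1 ≤ s j ∧ s j ≤ B)
    (hmono : Monotone p) (Mopt : ℕ)
    (hopt : IsLeast {M : ℕ | ∃ P : Finpartition (univ : Finset (Fin n)),
        (∀ S ∈ P.parts, ∑ j ∈ S, s j ≤ B) ∧ ∑ S ∈ P.parts, S.sup p = M} Mopt) :
    IsLeast {m : ℕ | ∃ x : Fin n → Fin n → ℕ,
        (∀ j k : Fin n, j ≤ k → x j k ≤ 1) ∧
        (∀ j : Fin n, ∑ k ∈ univ.filter (fun k => j ≤ k), x j k = 1) ∧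
        (∀ k : Fin n, ∑ j ∈ univ.filter (fun j => j ≤ k), s j * x j k ≤ B * x k k) ∧
        ∑ k, p k * x k k = m} Mopt := by
  refine hopt.of_exists_le_of_exists_le ?_ ?_
  · rintro _ ⟨P, hP, rfl⟩
    obtain ⟨h01, hrow, hcap⟩ := (P.isBatchAssignment_lastOfPart hP).isMILP1plusSolution
    refine ⟨_, ⟨_, h01, hrow, hcap, rfl⟩, ?_⟩
    rw [sum_mul_assignmentMatrix_diag]
    exact P.sum_filter_lastOfPart_le p
  · rintro _ ⟨x, h01, hrow, hcap, rfl⟩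
    obtain ⟨f, hf, hxf⟩ := IsMILP1plusSolution.exists_isBatchAssignment ⟨h01, hrow, hcap⟩
      fun j ↦ (hs j).1
    obtain ⟨P, hP, hcost⟩ := hf.exists_finpartition hmono
    refine ⟨_, ⟨P, hP, rfl⟩, hcost.trans_eq ?_⟩
    rw [← sum_mul_assignmentMatrix_diag]
    exact sum_congr rfl fun k _ ↦ by rw [hxf k k le_rfl]

/-- Correctness of the symmetry-breaking formulation (MILP1+) of Trindade et al.
The jobs `1,…,n` are indexed so that the processing times `p` are monotone
(`p 1 ≤ p 2 ≤ … ≤ p n`). A feasible solution consists of `x j k ∈ {0,1}` for `j ≤ k`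
satisfying `∑ k ≥ j, x j k = 1` for every `j` and `∑ j ≤ k, s j * x j k ≤ B * x k k`
for every `k`. The minimum of `∑ k, p k * x k k` over all feasible solutions is attained
and equals the optimal makespan `Mopt` of the instance. -/
theorem MILP1plus_correct (n B : ℕ) (hn : 1 ≤ n) (hB : 1 ≤ B)
    (s p : Fin n → ℕ) (hs : ∀ j, 1 ≤ s j ∧ s j ≤ B) (hp : ∀ j, 1 ≤ p j)
    (hmono : Monotone p) (Mopt : ℕ)
    (hopt : IsLeast {M : ℕ | ∃ P : Finpartition (univ : Finset (Fin n)),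
        (∀ S ∈ P.parts, ∑ j ∈ S, s j ≤ B) ∧ ∑ S ∈ P.parts, S.sup p = M} Mopt) :
    IsLeast {m : ℕ | ∃ x : Fin n → Fin n → ℕ,
        (∀ j k : Fin n, j ≤ k → x j k ≤ 1) ∧
        (∀ j : Fin n, ∑ k ∈ univ.filter (fun k => j ≤ k), x j k = 1) ∧
        (∀ k : Fin n, ∑ j ∈ univ.filter (fun j => j ≤ k), s j * x j k ≤ B * x k k) ∧
        ∑ k, p k * x k k = m} Mopt :=
  MILP1plus_correct_general n B s p hs hmono Mopt hopt
end

section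
/- Let δ ≥ 1 and θ ≥ 1 be integers, let J be a finite set, and let ℓ : J → {1,…,θ} and τ : J → {1,…,δ} be functions. Let a : {1,…,θ} × {1,…,δ} → ℕ satisfy, for every ℓ₀ ∈ {1,…,θ}: (i) Σ_{u=1}^{t} a(ℓ₀,u) ≤ #{j ∈ J : ℓ(j) = ℓ₀ and τ(j) ≤ t} for every t ∈ {1,…,δ}, and (ii) Σ_{u=1}^{δ} a(ℓ₀,u) = #{j ∈ J : ℓ(j) = ℓ₀}. Then there exists a function g : J → {1,…,θ} × {1,…,δ} such that for every j ∈ J, g(j) = (ℓ(j), t) for some t with t ≥ τ(j), and for every pair (ℓ₀,t), #{j ∈ J : g(j) = (ℓ₀,t)} = a(ℓ₀,t). -/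
/-!
Encode the slots as a multiset `M` of processing-time indices and fill them greedily: the
earliest slot `t` of `M` takes any job with `τ j ≤ t`, which exists by condition (i) at `t`.
Removing `t` and `j` preserves (i): below `t` the slot side is empty, and from `t` on both sides
drop by one. Condition (ii) says that the jobs and slots run out together.
-/

open Finset

section
variable {α J : Type*} [LinearOrder α]

theorem exists_map_val_eq_of_card_filter_le (τ : J → α) (S : Finset J) (M : Multiset α)
    (hle : ∀ t, Multiset.card (M.filter (· ≤ t)) ≤ #(S.filter (τ · ≤ t)))
    (hcard : Multiset.card M = #S) :
    ∃ f : J → α, (∀ j ∈ S, τ j ≤ f j) ∧ S.val.map f = M := by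
  classical
  induction S using Finset.strongInduction generalizing M with
  | _ S ih =>
  rcases eq_or_ne M 0 with rfl | hM
  · rw [Multiset.card_zero, eq_comm, card_eq_zero] at hcard
    exact ⟨τ, fun _ _ => le_rfl, by simp [hcard]⟩
  obtain ⟨t, htM, htmin⟩ := Multiset.exists_min_image id hM
  obtain ⟨M', rfl⟩ := Multiset.exists_cons_of_mem htM
  have hcons (u : α) (htu : t ≤ u) :
      Multiset.card ((t ::ₘ M').filter (· ≤ u)) = Multiset.card (M'.filter (· ≤ u)) + 1 := by
    rw [Multiset.filter_cons_of_pos (p := (· ≤ u)) _ htu, Multiset.card_cons]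
  obtain ⟨j, hjS, hjt⟩ : ∃ j ∈ S, τ j ≤ t := by
    have := hcons t le_rfl ▸ hle t
    obtain ⟨j, hj⟩ := card_pos.1 (by omega : 0 < #(S.filter (τ · ≤ t)))
    exact ⟨j, mem_filter.1 hj⟩
  have hle' (u : α) : Multiset.card (M'.filter (· ≤ u)) ≤ #((S.erase j).filter (τ · ≤ u)) := by
    rcases lt_or_ge u t with hut | htu
    · rw [(Multiset.filter_eq_nil (p := (· ≤ u))).2 fun v hv => not_le.2 <|
        hut.trans_le (htmin v (Multiset.mem_cons_of_mem hv))]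
      exact Nat.zero_le _
    · have := hcons u htu ▸ hle u
      rw [filter_erase, card_erase_of_mem (mem_filter.2 ⟨hjS, hjt.trans htu⟩)]
      omega
  have hcard' : Multiset.card M' = #(S.erase j) := by
    rw [card_erase_of_mem hjS, ← hcard, Multiset.card_cons, Nat.add_sub_cancel]
  obtain ⟨f, hfτ, hfM⟩ := ih (S.erase j) (erase_ssubset hjS) M' hle' hcard'
  refine ⟨Function.update f j t, fun i hi => ?_, ?_⟩
  · rcases eq_or_ne i j with rfl | hij
    · simpa using hjt
    · simpa [hij] using hfτ i (mem_erase.2 ⟨hij, hi⟩)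
  · rw [← Multiset.cons_erase (mem_def.1 hjS), Multiset.map_cons, Function.update_self,
      ← erase_val, ← hfM]
    congr 1
    exact Multiset.map_congr rfl fun i hi => Function.update_of_ne (ne_of_mem_erase hi) _ _

theorem Multiset.card_filter_le_eq_sum_count [Fintype α] (M : Multiset α) (t : α) :
    Multiset.card (M.filter (· ≤ t)) = ∑ u ∈ univ.filter (· ≤ t), M.count u := by
  classical
  rw [← Multiset.sum_count_eq_card (s := univ) (fun _ _ => mem_univ _), sum_filter]
  exact sum_congr rfl fun u _ => Multiset.count_filter

theorem exists_card_filter_eq_of_sum_le [Fintype α] (τ : J → α) (S : Finset J) (a : α → ℕ)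
    (hle : ∀ t, ∑ u ∈ univ.filter (· ≤ t), a u ≤ #(S.filter (τ · ≤ t)))
    (hsum : ∑ u, a u = #S) :
    ∃ f : J → α, (∀ j ∈ S, τ j ≤ f j) ∧ ∀ t, #(S.filter (f · = t)) = a t := by
  classical
  set M : Multiset α := ∑ u, Multiset.replicate (a u) u
  have hcount (t : α) : M.count t = a t := by
    simp only [M, Multiset.count_sum', Multiset.count_replicate, sum_ite_eq', mem_univ, if_true]
  obtain ⟨f, hfτ, hfM⟩ := exists_map_val_eq_of_card_filter_le τ S M
    (fun t => by simpa only [Multiset.card_filter_le_eq_sum_count, hcount] using hle t)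
    (by rw [← Multiset.sum_count_eq_card (s := univ) (fun _ _ => mem_univ _), ← hsum]
        exact sum_congr rfl fun u _ => hcount u)
  refine ⟨f, hfτ, fun t => ?_⟩
  rw [← hcount, ← hfM, Multiset.count_map, card_def, filter_val]
  simp only [eq_comm]
end

theorem arcflow_slot_assignment_general (δ θ : ℕ)
    {J : Type*} [Fintype J]
    (ℓ : J → Fin θ) (τ : J → Fin δ) (a : Fin θ → Fin δ → ℕ)
    (h1 : ∀ (ℓ₀ : Fin θ) (t : Fin δ),
      ∑ u ∈ univ.filter (fun u => u ≤ t), a ℓ₀ u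
        ≤ (univ.filter (fun j => ℓ j = ℓ₀ ∧ τ j ≤ t)).card)
    (h2 : ∀ ℓ₀ : Fin θ, ∑ u, a ℓ₀ u = (univ.filter (fun j => ℓ j = ℓ₀)).card) :
    ∃ g : J → Fin θ × Fin δ,
      (∀ j, (g j).1 = ℓ j ∧ τ j ≤ (g j).2) ∧
      (∀ (ℓ₀ : Fin θ) (t : Fin δ),
        (univ.filter (fun j => g j = (ℓ₀, t))).card = a ℓ₀ t) := by
  choose f hfτ hfa using fun ℓ₀ => exists_card_filter_eq_of_sum_le τ
    (univ.filter (ℓ · = ℓ₀)) (a ℓ₀) (fun t => by simpa only [filter_filter] using h1 ℓ₀ t) (h2 ℓ₀)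
  refine ⟨fun j => (ℓ j, f (ℓ j) j), fun j => ⟨rfl, hfτ _ j (by simp)⟩, fun ℓ₀ t => ?_⟩
  rw [← hfa ℓ₀ t, filter_filter]
  refine congrArg card (filter_congr fun j _ => ?_)
  rw [Prod.mk.injEq]
  exact and_congr_right fun h => by rw [h]

/-- The combinatorial content of the paper's mapping of arc flows into job assignments
(Section 3.1). Jobs `j ∈ J` have a size class `ℓ j ∈ {1,…,θ}` (here `Fin θ`) and a
processing-time index `τ j ∈ {1,…,δ}` (here `Fin δ`). Given slot counts
`a : Fin θ → Fin δ → ℕ` satisfying, for every size class `ℓ₀`: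
(i) for every `t`, `∑ u ≤ t, a ℓ₀ u ≤ #{j : ℓ j = ℓ₀ ∧ τ j ≤ t}`, and
(ii) `∑ u, a ℓ₀ u = #{j : ℓ j = ℓ₀}`,
there is an assignment `g` of jobs to slots `(ℓ₀, t)` such that each job `j` goes to a
slot `(ℓ j, t)` with `τ j ≤ t`, and exactly `a ℓ₀ t` jobs go to slot `(ℓ₀, t)`. -/
theorem arcflow_slot_assignment (δ θ : ℕ) (hδ : 1 ≤ δ) (hθ : 1 ≤ θ)
    {J : Type*} [Fintype J]
    (ℓ : J → Fin θ) (τ : J → Fin δ) (a : Fin θ → Fin δ → ℕ)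
    (h1 : ∀ (ℓ₀ : Fin θ) (t : Fin δ),
      ∑ u ∈ univ.filter (fun u => u ≤ t), a ℓ₀ u
        ≤ (univ.filter (fun j => ℓ j = ℓ₀ ∧ τ j ≤ t)).card)
    (h2 : ∀ ℓ₀ : Fin θ, ∑ u, a ℓ₀ u = (univ.filter (fun j => ℓ j = ℓ₀)).card) :
    ∃ g : J → Fin θ × Fin δ,
      (∀ j, (g j).1 = ℓ j ∧ τ j ≤ (g j).2) ∧
      (∀ (ℓ₀ : Fin θ) (t : Fin δ),
        (univ.filter (fun j => g j = (ℓ₀, t))).card = a ℓ₀ t) :=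
  arcflow_slot_assignment_general δ θ ℓ τ a h1 h2
end

section
/- For every capacity-feasible schedule of an instance of 1|s_j,B|C_max with makespan M, there exists a feasible solution (f, y, v, z) of (FLOW) whose objective value Σ_{t=1}^{δ} P_t v_t equals M. -/
open Finset

/-- The set of job arcs `A^J = {(i,j) : 0 ≤ i < j ≤ B, j - i = s k for some job k}`. -/
def flowAJ (n B : ℕ) (s : Fin n → ℕ) : Finset (ℕ × ℕ) :=
  ((Finset.range (B + 1)) ×ˢ (Finset.range (B + 1))).filter
    (fun q => q.1 < q.2 ∧ ∃ k : Fin n, q.2 - q.1 = s k)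

/-- The set of loss arcs `A^L = {(i,B) : 1 ≤ i ≤ B-1}`. -/
def flowAL (B : ℕ) : Finset (ℕ × ℕ) :=
  ((Finset.range (B + 1)) ×ˢ (Finset.range (B + 1))).filter
    (fun q => 1 ≤ q.1 ∧ q.1 < B ∧ q.2 = B)

/-- Feasibility for the formulation (FLOW).  Here `P : Fin δ → ℕ` lists the distinct
processing times `P_1 < … < P_δ` (the index `t : Fin δ` stands for the paper's `t+1`);
`f a t` is the flow of the job arc `a ∈ A^J` in structure `t`, `y a t` the flow on the
loss arc `a ∈ A^L`, `v t` the flow on the feedback arc, and `z c u`, for `u ∈ {0,…,δ}`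
(the paper's `z_{c,u}` with conventions `z_{c,0} = z_{c,δ} = 0`), the number of jobs of
size `c` left over for structures with larger processing time.  The conditions are:
flows vanish off the arc sets, flow conservation at node `0` (total outflow `v t`), at
node `B` (total inflow `v t`) and at the interior nodes, and the job-balance equations
`NT_{c,t} − ∑_{(i,j) ∈ A^J, j−i=c} f_{i,j,t} = z_{c,t} − z_{c,t−1}`. -/
def FlowFeasible (n B : ℕ) (s p : Fin n → ℕ) (δ : ℕ) (P : Fin δ → ℕ)
    (f y : ℕ × ℕ → Fin δ → ℕ) (v : Fin δ → ℕ) (z : ℕ → ℕ → ℕ) : Prop :=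
  (∀ a t, a ∉ flowAJ n B s → f a t = 0) ∧
  (∀ a t, a ∉ flowAL B → y a t = 0) ∧
  (∀ c, z c 0 = 0) ∧ (∀ c, z c δ = 0) ∧
  (∀ t : Fin δ,
    (∑ a ∈ (flowAJ n B s).filter (fun a => a.1 = 0), f a t)
      + (∑ a ∈ (flowAL B).filter (fun a => a.1 = 0), y a t) = v t) ∧
  (∀ t : Fin δ,
    (∑ a ∈ (flowAJ n B s).filter (fun a => a.2 = B), f a t)
      + (∑ a ∈ (flowAL B).filter (fun a => a.2 = B), y a t) = v t) ∧
  (∀ (t : Fin δ) (u : ℕ), 0 < u → u < B →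
    (∑ a ∈ (flowAJ n B s).filter (fun a => a.2 = u), f a t)
      + (∑ a ∈ (flowAL B).filter (fun a => a.2 = u), y a t)
    = (∑ a ∈ (flowAJ n B s).filter (fun a => a.1 = u), f a t)
      + (∑ a ∈ (flowAL B).filter (fun a => a.1 = u), y a t)) ∧
  (∀ (t : Fin δ) (c : ℕ), 1 ≤ c → c ≤ B →
    ((univ.filter (fun j => s j = c ∧ p j = P t)).card : ℤ)
      - ∑ a ∈ (flowAJ n B s).filter (fun a => a.2 - a.1 = c), (f a t : ℤ)
    = (z c (t.val + 1) : ℤ) - (z c t.val : ℤ))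

/-! Each batch `S` of load `L = ∑_{j ∈ S} s_j` becomes one unit of flow along the path
`0 → s_{j₁} → s_{j₁} + s_{j₂} → ⋯ → L` of job arcs, closed by the loss arc `(L, B)` when `L < B`,
and is routed in the structure `t` with `P_t = max_{j ∈ S} p_j`. Then `v_t` counts the batches
of processing time `P_t`, so the objective is the makespan, and every path is a cycle through the
feedback arc, which gives flow conservation. A job of size `c` is processed in a structure at
least its own class; taking `z_{c,u}` to be the number of such jobs whose own class is below `u`
and whose batch has class at least `u` makes the job-balance equations telescope. -/

def pathArcs : ℕ → List ℕ → List (ℕ × ℕ)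
  | _, [] => []
  | i, c :: l => (i, i + c) :: pathArcs (i + c) l

theorem map_sub_pathArcs (i : ℕ) (l : List ℕ) :
    (pathArcs i l).map (fun a => a.2 - a.1) = l := by
  induction l generalizing i with
  | nil => rfl
  | cons c l ih => simp [pathArcs, ih]

theorem cons_map_snd_pathArcs_perm (i : ℕ) (l : List ℕ) :
    (i :: (pathArcs i l).map Prod.snd).Perm ((i + l.sum) :: (pathArcs i l).map Prod.fst) := by
  induction l generalizing i with
  | nil => simp [pathArcs]
  | cons c l ih =>
    simpa [pathArcs, add_assoc] using (ih (i + c)).cons i |>.trans (List.Perm.swap _ _ _)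

theorem bounds_of_mem_pathArcs {i : ℕ} {l : List ℕ} {a : ℕ × ℕ} (ha : a ∈ pathArcs i l) :
    i ≤ a.1 ∧ a.2 ≤ i + l.sum ∧ ∃ c ∈ l, a.2 = a.1 + c := by
  induction l generalizing i with
  | nil => simp [pathArcs] at ha
  | cons c l ih =>
    simp only [pathArcs, List.mem_cons] at ha
    rcases ha with rfl | ha
    · exact ⟨le_rfl, by simp, c, by simp⟩
    · obtain ⟨h₁, h₂, c', hc', h₃⟩ := ih ha
      exact ⟨by omega, by rw [List.sum_cons]; omega, c', List.mem_cons_of_mem c hc', h₃⟩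

theorem sum_count_filter_eq_card {α : Type*} [DecidableEq α] {T : Finset α} {m : Multiset α}
    (hm : ∀ a ∈ m, a ∈ T) (q : α → Prop) [DecidablePred q] :
    ∑ a ∈ T.filter q, m.count a = (m.filter q).card := by
  rw [← Multiset.sum_count_eq_card (s := T.filter q) (m := m.filter q)]
  · refine Finset.sum_congr rfl fun a ha => (Multiset.count_filter_of_pos ?_).symm
    exact (Finset.mem_filter.mp ha).2
  · intro a ha
    rw [Multiset.mem_filter] at ha
    exact Finset.mem_filter.mpr ⟨hm a ha.1, ha.2⟩

theorem card_filter_eq_count_map {α β : Type*} [DecidableEq β] (m : Multiset α) (f : α → β)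
    (b : β) : (m.filter (fun a => f a = b)).card = (m.map f).count b := by
  simp_rw [Multiset.count_map, eq_comm]

section FlowFeasible

variable {n B δ : ℕ} {s p : Fin n → ℕ} {P : Fin δ → ℕ}

theorem bounds_of_mem_flowAJ {a : ℕ × ℕ} (ha : a ∈ flowAJ n B s) : a.1 < a.2 ∧ a.2 ≤ B := by
  simp only [flowAJ, mem_filter, mem_product, mem_range] at ha
  omega

theorem bounds_of_mem_flowAL {a : ℕ × ℕ} (ha : a ∈ flowAL B) : a.1 < a.2 ∧ a.2 ≤ B := by
  simp only [flowAL, mem_filter, mem_product, mem_range] at ha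
  omega

theorem flowFeasible_of_cycles (hB : 0 < B) (F Y : Fin δ → Multiset (ℕ × ℕ)) (v : Fin δ → ℕ)
    (z : ℕ → ℕ → ℕ) (hF : ∀ t, ∀ a ∈ F t, a ∈ flowAJ n B s) (hY : ∀ t, ∀ a ∈ Y t, a ∈ flowAL B)
    (hcycle : ∀ t, v t • {0} + (F t + Y t).map Prod.snd = v t • {B} + (F t + Y t).map Prod.fst)
    (hz₀ : ∀ c, z c 0 = 0) (hz_δ : ∀ c, z c δ = 0)
    (hjobs : ∀ (t : Fin δ) c, ((univ.filter (fun j => s j = c ∧ p j = P t)).card : ℤ)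
      - ((F t).map (fun a => a.2 - a.1)).count c = z c (t.val + 1) - z c t.val) :
    FlowFeasible n B s p δ P (fun a t => (F t).count a) (fun a t => (Y t).count a) v z := by
  have hlt : ∀ t, ∀ a ∈ F t + Y t, a.1 < a.2 ∧ a.2 ≤ B := fun t a ha =>
    (Multiset.mem_add.mp ha).elim (fun h => bounds_of_mem_flowAJ (hF t a h))
      (fun h => bounds_of_mem_flowAL (hY t a h))
  have hnode : ∀ t (g : ℕ × ℕ → ℕ) u,
      (∑ a ∈ (flowAJ n B s).filter (fun a => g a = u), (F t).count a)
        + ∑ a ∈ (flowAL B).filter (fun a => g a = u), (Y t).count a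
        = ((F t + Y t).map g).count u := by
    intro t g u
    rw [sum_count_filter_eq_card (hF t), sum_count_filter_eq_card (hY t), ← Multiset.card_add,
      ← Multiset.filter_add, card_filter_eq_count_map]
  have hcount : ∀ t u, v t * (if u = 0 then 1 else 0) + ((F t + Y t).map Prod.snd).count u
      = v t * (if u = B then 1 else 0) + ((F t + Y t).map Prod.fst).count u := by
    intro t u
    simpa [Multiset.count_singleton, eq_comm] using congr_arg (Multiset.count u) (hcycle t)
  refine ⟨fun a t ha => Multiset.count_eq_zero.mpr fun h => ha (hF t a h),
    fun a t ha => Multiset.count_eq_zero.mpr fun h => ha (hY t a h), hz₀, hz_δ,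
    fun t => ?_, fun t => ?_, fun t u hu hub => ?_, fun t c _ _ => ?_⟩
  · have hsnd : ((F t + Y t).map Prod.snd).count 0 = 0 := by
      simp only [Multiset.count_eq_zero, Multiset.mem_map]
      rintro ⟨a, ha, h⟩
      have := hlt t a ha
      omega
    have := hcount t 0
    rw [hnode t Prod.fst 0]
    simp only [hsnd, if_pos, if_neg hB.ne] at this
    omega
  · have hfst : ((F t + Y t).map Prod.fst).count B = 0 := by
      simp only [Multiset.count_eq_zero, Multiset.mem_map]
      rintro ⟨a, ha, h⟩
      have := hlt t a ha
      omega
    have := hcount t B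
    rw [hnode t Prod.snd B]
    simp only [hfst, if_pos, if_neg hB.ne'] at this
    omega
  · have := hcount t u
    rw [hnode t Prod.snd u, hnode t Prod.fst u]
    simp only [if_neg hu.ne', if_neg hub.ne] at this
    omega
  · rw [← hjobs, ← card_filter_eq_count_map, ← sum_count_filter_eq_card (hF t)]
    push_cast
    rfl

end FlowFeasible

section Batch

variable {n : ℕ} (s : Fin n → ℕ) (B : ℕ)

noncomputable def batchArcs (S : Finset (Fin n)) : Multiset (ℕ × ℕ) :=
  pathArcs 0 (S.toList.map s)

def lossArcs (S : Finset (Fin n)) : Multiset (ℕ × ℕ) :=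
  if ∑ j ∈ S, s j < B then {(∑ j ∈ S, s j, B)} else 0

variable {s B}

theorem map_sub_batchArcs (S : Finset (Fin n)) :
    (batchArcs s S).map (fun a => a.2 - a.1) = S.val.map s := by
  rw [batchArcs, Multiset.map_coe, map_sub_pathArcs, ← Multiset.map_coe, Finset.coe_toList]

theorem batchArcs_subset_flowAJ (hs : ∀ j, 1 ≤ s j) {S : Finset (Fin n)}
    (hS : ∑ j ∈ S, s j ≤ B) : ∀ a ∈ batchArcs s S, a ∈ flowAJ n B s := by
  intro a ha
  obtain ⟨-, h₂, c, hc, h₃⟩ := bounds_of_mem_pathArcs ha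
  obtain ⟨k, -, rfl⟩ := List.mem_map.mp hc
  rw [show (S.toList.map s).sum = ∑ j ∈ S, s j from S.sum_map_toList s] at h₂
  have := hs k
  simp only [flowAJ, mem_filter, mem_product, mem_range]
  exact ⟨by omega, by omega, k, by omega⟩

theorem lossArcs_subset_flowAL (hs : ∀ j, 1 ≤ s j) {S : Finset (Fin n)} (hS : S.Nonempty) :
    ∀ a ∈ lossArcs s B S, a ∈ flowAL B := by
  intro a ha
  unfold lossArcs at ha
  split_ifs at ha with hlt
  · obtain ⟨j, hj⟩ := hS
    have := (hs j).trans (Finset.single_le_sum (fun i _ => Nat.zero_le (s i)) hj)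
    rw [Multiset.mem_singleton.mp ha]
    simp only [flowAL, mem_filter, mem_product, mem_range, and_true]
    omega
  · simp at ha

theorem batch_cycle {S : Finset (Fin n)} (hS : ∑ j ∈ S, s j ≤ B) :
    {0} + (batchArcs s S + lossArcs s B S).map Prod.snd
      = {B} + (batchArcs s S + lossArcs s B S).map Prod.fst := by
  have hpath : {0} + (batchArcs s S).map Prod.snd
      = {∑ j ∈ S, s j} + (batchArcs s S).map Prod.fst := by
    have := cons_map_snd_pathArcs_perm 0 (S.toList.map s)
    rw [show (S.toList.map s).sum = ∑ j ∈ S, s j from S.sum_map_toList s] at this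
    simpa [batchArcs, add_comm] using this
  unfold lossArcs
  split_ifs
  · simp only [Multiset.map_add, Multiset.map_singleton, ← add_assoc, hpath]
    abel
  · simpa [show ∑ j ∈ S, s j = B by omega] using hpath

end Batch

theorem Finpartition.sum_sum_parts {α M : Type*} [DecidableEq α] [AddCommMonoid M]
    {s : Finset α} (Q : Finpartition s) (f : α → M) :
    ∑ S ∈ Q.parts, ∑ j ∈ S, f j = ∑ j ∈ s, f j := by
  have h := Finset.sum_biUnion (f := f) Q.disjoint
  rw [Q.biUnion_parts] at h
  exact h.symm

theorem sum_mul_card_filter_eq_sum {ι κ : Type*} [Fintype ι] {P : ι → ℕ}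
    (hP : Function.Injective P) {T : Finset κ} {φ : κ → ℕ} (hφ : ∀ x ∈ T, φ x ∈ Set.range P) :
    ∑ i, P i * (T.filter (fun x => φ x = P i)).card = ∑ x ∈ T, φ x := by
  classical
  calc ∑ i, P i * (T.filter (fun x => φ x = P i)).card
      = ∑ i, ∑ x ∈ T.filter (fun x => φ x = P i), φ x := by
        refine Finset.sum_congr rfl fun i _ => ?_
        rw [Finset.sum_congr rfl fun x hx => (Finset.mem_filter.mp hx).2, Finset.sum_const,
          smul_eq_mul, mul_comm]
    _ = ∑ b ∈ univ.image P, ∑ x ∈ T.filter (fun x => φ x = b), φ x :=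
        (Finset.sum_image (f := fun b => ∑ x ∈ T.filter (fun x => φ x = b), φ x)
          fun i _ j _ h => hP h).symm
    _ = ∑ x ∈ T, φ x := Finset.sum_fiberwise_of_maps_to (fun x hx => by
        obtain ⟨i, hi⟩ := hφ x hx
        exact Finset.mem_image.mpr ⟨i, mem_univ i, hi⟩) φ

theorem Finset.sup_mem_range {ι κ α : Type*} [LinearOrder α] [OrderBot α] {S : Finset ι}
    {p : ι → α} {P : κ → α} (hS : S.Nonempty) (hp : ∀ j ∈ S, p j ∈ Set.range P) :
    S.sup p ∈ Set.range P := by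
  obtain ⟨j, hj, h⟩ := Finset.exists_mem_eq_sup S hS p
  exact h ▸ hp j hj

section ValueRank

variable {δ : ℕ} {P : Fin δ → ℕ}

def valueRank (P : Fin δ → ℕ) (x : ℕ) : ℕ := (univ.filter (fun t => P t < x)).card

theorem valueRank_monotone : Monotone (valueRank P) := fun _ _ h =>
  Finset.card_le_card (Finset.monotone_filter_right _ fun _ _ ht => lt_of_lt_of_le ht h)

theorem valueRank_apply (hP : StrictMono P) (t : Fin δ) : valueRank P (P t) = t := by
  simp only [valueRank, hP.lt_iff_lt]
  rw [← Fin.card_Iio t]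
  congr 1
  ext; simp

theorem valueRank_eq_iff (hP : StrictMono P) {x : ℕ} (hx : x ∈ Set.range P) (t : Fin δ) :
    valueRank P x = t ↔ x = P t := by
  obtain ⟨t', rfl⟩ := hx
  rw [valueRank_apply hP, Fin.val_inj, hP.injective.eq_iff]

theorem valueRank_lt (hP : StrictMono P) {x : ℕ} (hx : x ∈ Set.range P) : valueRank P x < δ := by
  obtain ⟨t, rfl⟩ := hx
  rw [valueRank_apply hP]
  exact t.isLt

end ValueRank

section Schedule

variable {n δ : ℕ} (s p : Fin n → ℕ) (B : ℕ) (P : Fin δ → ℕ)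
  (Q : Finpartition (univ : Finset (Fin n)))

def classParts (t : Fin δ) : Finset (Finset (Fin n)) :=
  Q.parts.filter (fun S => S.sup p = P t)

noncomputable def classArcs (t : Fin δ) : Multiset (ℕ × ℕ) :=
  ∑ S ∈ classParts p P Q t, batchArcs s S

def classLoss (t : Fin δ) : Multiset (ℕ × ℕ) :=
  ∑ S ∈ classParts p P Q t, lossArcs s B S

def carriedJobs (c u : ℕ) : ℕ :=
  ∑ S ∈ Q.parts, (S.filter (fun j =>
    s j = c ∧ valueRank P (p j) < u ∧ u ≤ valueRank P (S.sup p))).card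

variable {s p B P Q}

theorem classArcs_cycle (hQ : ∀ S ∈ Q.parts, ∑ j ∈ S, s j ≤ B) (t : Fin δ) :
    (classParts p P Q t).card • {0} + (classArcs s p P Q t + classLoss s p B P Q t).map Prod.snd
      = (classParts p P Q t).card • {B}
        + (classArcs s p P Q t + classLoss s p B P Q t).map Prod.fst := by
  have h := Finset.sum_congr (s₁ := classParts p P Q t) rfl fun S hS =>
    batch_cycle (s := s) (hQ S (Finset.mem_filter.mp hS).1)
  have hmap (g : ℕ × ℕ → ℕ) : (classArcs s p P Q t + classLoss s p B P Q t).map g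
      = ∑ S ∈ classParts p P Q t, (batchArcs s S + lossArcs s B S).map g := by
    simp only [classArcs, classLoss, ← Finset.sum_add_distrib]
    exact map_sum (Multiset.mapAddMonoidHom g) _ _
  simpa only [Finset.sum_add_distrib, Finset.sum_const, hmap] using h

theorem classArcs_subset_flowAJ (hs : ∀ j, 1 ≤ s j) (hQ : ∀ S ∈ Q.parts, ∑ j ∈ S, s j ≤ B)
    (t : Fin δ) : ∀ a ∈ classArcs s p P Q t, a ∈ flowAJ n B s := by
  intro a ha
  obtain ⟨S, hS, haS⟩ := Multiset.mem_sum.mp ha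
  exact batchArcs_subset_flowAJ hs (hQ S (Finset.mem_filter.mp hS).1) a haS

theorem classLoss_subset_flowAL (hs : ∀ j, 1 ≤ s j) (t : Fin δ) :
    ∀ a ∈ classLoss s p B P Q t, a ∈ flowAL B := by
  intro a ha
  obtain ⟨S, hS, haS⟩ := Multiset.mem_sum.mp ha
  exact lossArcs_subset_flowAL hs (Q.nonempty_of_mem_parts (Finset.mem_filter.mp hS).1) a haS

theorem count_map_sub_classArcs (t : Fin δ) (c : ℕ) :
    ((classArcs s p P Q t).map (fun a => a.2 - a.1)).count c
      = ∑ S ∈ Q.parts, (S.filter (fun j => s j = c ∧ S.sup p = P t)).card := by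
  rw [classArcs, ← Multiset.mapAddMonoidHom_apply, map_sum, Multiset.count_sum', classParts,
    Finset.sum_filter]
  refine Finset.sum_congr rfl fun S _ => ?_
  rw [Multiset.mapAddMonoidHom_apply, map_sub_batchArcs, Multiset.count_map]
  split_ifs with h
  · simp only [h, and_true, eq_comm (a := c)]
    rfl
  · simp [h]

theorem batch_job_balance (hP : StrictMono P) {S : Finset (Fin n)} (hS : S.Nonempty)
    (hp : ∀ j, p j ∈ Set.range P) (c : ℕ) (t : Fin δ) :
    ((S.filter (fun j => s j = c ∧ p j = P t)).card : ℤ)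
      - (S.filter (fun j => s j = c ∧ S.sup p = P t)).card
      = (S.filter (fun j => s j = c ∧ valueRank P (p j) < t + 1
          ∧ t + 1 ≤ valueRank P (S.sup p))).card
        - (S.filter (fun j => s j = c ∧ valueRank P (p j) < t
          ∧ t ≤ valueRank P (S.sup p))).card := by
  simp only [Finset.card_filter, Nat.cast_sum, Nat.cast_ite, Nat.cast_one, Nat.cast_zero,
    ← Finset.sum_sub_distrib]
  refine Finset.sum_congr rfl fun j hj => ?_
  have hsup := Finset.sup_mem_range hS fun j _ => hp j
  have hle : valueRank P (p j) ≤ valueRank P (S.sup p) :=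
    valueRank_monotone (Finset.le_sup hj)
  simp only [← valueRank_eq_iff hP (hp j), ← valueRank_eq_iff hP hsup]
  split_ifs <;> omega

theorem classJobs_balance (hP : StrictMono P) (hp : ∀ j, p j ∈ Set.range P) (t : Fin δ)
    (c : ℕ) :
    ((univ.filter (fun j => s j = c ∧ p j = P t)).card : ℤ)
      - ((classArcs s p P Q t).map (fun a => a.2 - a.1)).count c
      = carriedJobs s p P Q c (t.val + 1) - carriedJobs s p P Q c t.val := by
  have hjobs : (univ.filter (fun j => s j = c ∧ p j = P t)).card
      = ∑ S ∈ Q.parts, (S.filter (fun j => s j = c ∧ p j = P t)).card := by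
    simp only [Finset.card_filter]
    exact (Q.sum_sum_parts _).symm
  rw [hjobs, count_map_sub_classArcs, carriedJobs, carriedJobs]
  push_cast
  rw [← Finset.sum_sub_distrib, ← Finset.sum_sub_distrib]
  exact Finset.sum_congr rfl fun S hS =>
    batch_job_balance hP (Q.nonempty_of_mem_parts hS) hp c t

theorem carriedJobs_zero (c : ℕ) : carriedJobs s p P Q c 0 = 0 := by
  simp [carriedJobs]

theorem carriedJobs_top (hP : StrictMono P) (hp : ∀ j, p j ∈ Set.range P) (c : ℕ) :
    carriedJobs s p P Q c δ = 0 := by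
  refine Finset.sum_eq_zero fun S hS => Finset.card_eq_zero.mpr <|
    Finset.filter_eq_empty_iff.mpr fun j _ h => ?_
  have := valueRank_lt hP (Finset.sup_mem_range (Q.nonempty_of_mem_parts hS) fun j _ => hp j)
  omega

end Schedule

theorem schedule_to_flow_general (n B : ℕ) (hB : 1 ≤ B)
    (s p : Fin n → ℕ) (hs : ∀ j, 1 ≤ s j ∧ s j ≤ B)
    (δ : ℕ) (P : Fin δ → ℕ) (hPmono : StrictMono P)
    (hPall : ∀ j, ∃ t, p j = P t)
    (Q : Finpartition (univ : Finset (Fin n)))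
    (hQ : ∀ S ∈ Q.parts, ∑ j ∈ S, s j ≤ B)
    (M : ℕ) (hM : ∑ S ∈ Q.parts, S.sup p = M) :
    ∃ (f y : ℕ × ℕ → Fin δ → ℕ) (v : Fin δ → ℕ) (z : ℕ → ℕ → ℕ),
      FlowFeasible n B s p δ P f y v z ∧ ∑ t, P t * v t = M := by
  have hs₁ : ∀ j, 1 ≤ s j := fun j => (hs j).1
  have hp : ∀ j, p j ∈ Set.range P := fun j => (hPall j).imp fun _ h => h.symm
  refine ⟨fun a t => (classArcs s p P Q t).count a, fun a t => (classLoss s p B P Q t).count a,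
    fun t => (classParts p P Q t).card, carriedJobs s p P Q,
    flowFeasible_of_cycles hB _ _ _ _ (classArcs_subset_flowAJ hs₁ hQ)
      (classLoss_subset_flowAL hs₁) (classArcs_cycle hQ) carriedJobs_zero
      (carriedJobs_top hPmono hp) (classJobs_balance hPmono hp), ?_⟩
  rw [← hM]
  exact sum_mul_card_filter_eq_sum hPmono.injective fun S hS =>
    Finset.sup_mem_range (Q.nonempty_of_mem_parts hS) fun j _ => hp j

/-- For every capacity-feasible schedule of an instance of `1|s_j,B|C_max` with
makespan `M`, there exists a feasible solution `(f, y, v, z)` of (FLOW) whose objective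
value `∑ t, P t * v t` equals `M`.  Schedules are `Finpartition`s of the job set;
the makespan is `∑ S ∈ Q.parts, S.sup p`; `P : Fin δ → ℕ` enumerates, strictly
increasingly, exactly the distinct values among the processing times `p j`. -/
theorem schedule_to_flow (n B : ℕ) (hn : 1 ≤ n) (hB : 1 ≤ B)
    (s p : Fin n → ℕ) (hs : ∀ j, 1 ≤ s j ∧ s j ≤ B) (hp : ∀ j, 1 ≤ p j)
    (δ : ℕ) (P : Fin δ → ℕ) (hPmono : StrictMono P)
    (hPmem : ∀ t, ∃ j, p j = P t) (hPall : ∀ j, ∃ t, p j = P t)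
    (Q : Finpartition (univ : Finset (Fin n)))
    (hQ : ∀ S ∈ Q.parts, ∑ j ∈ S, s j ≤ B)
    (M : ℕ) (hM : ∑ S ∈ Q.parts, S.sup p = M) :
    ∃ (f y : ℕ × ℕ → Fin δ → ℕ) (v : Fin δ → ℕ) (z : ℕ → ℕ → ℕ),
      FlowFeasible n B s p δ P f y v z ∧ ∑ t, P t * v t = M :=
  schedule_to_flow_general n B hB s p hs δ P hPmono hPall Q hQ M hM
end

section
/- For every feasible solution (f, y, v, z) of (FLOW), there exists a capacity-feasible schedule of the instance whose makespan is at most the objective value Σ_{t=1}^{δ} P_t v_t. -/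
open Finset

theorem Multiset.countP_singleton {α : Type*} (q : α → Prop) [DecidablePred q] (a : α) :
    ({a} : Multiset α).countP q = if q a then 1 else 0 := by
  simp [Multiset.countP_eq_card_filter, Multiset.filter_singleton, apply_ite]

theorem Multiset.countP_sum_nsmul_singleton {α : Type*} (A : Finset α) (g : α → ℕ)
    (q : α → Prop) [DecidablePred q] :
    (∑ a ∈ A, g a • ({a} : Multiset α)).countP q = ∑ a ∈ A with q a, g a := by
  rw [← Multiset.coe_countPAddMonoidHom, map_sum]
  simp [Finset.sum_filter, Multiset.countP_singleton]

/-- A flow on the acyclic network with nodes `0, …, B` and arcs `(i, j)`, `i < j`, given as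
the multiset of its arcs, each counted with its flow value. -/
structure IsForwardFlow (B : ℕ) (F : Multiset (ℕ × ℕ)) : Prop where
  lt_of_mem : ∀ a ∈ F, a.1 < a.2
  le_of_mem : ∀ a ∈ F, a.2 ≤ B
  countP_snd_eq_countP_fst : ∀ u, 0 < u → u < B → F.countP (·.2 = u) = F.countP (·.1 = u)

namespace IsForwardFlow

variable {B : ℕ} {F : Multiset (ℕ × ℕ)}

theorem eq_zero_of_countP_fst_zero (hF : IsForwardFlow B F) (h0 : F.countP (·.1 = 0) = 0) :
    F = 0 := by
  have hout : ∀ u, F.countP (·.1 = u) = 0 := by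
    intro u
    induction u using Nat.strong_induction_on with
    | _ u ih =>
    rcases Nat.eq_zero_or_pos u with rfl | hu
    · exact h0
    rcases lt_or_ge u B with huB | huB
    · rw [← hF.countP_snd_eq_countP_fst u hu huB, Multiset.countP_eq_zero]
      rintro a ha rfl
      exact Multiset.countP_eq_zero.1 (ih a.1 (hF.lt_of_mem a ha)) a ha rfl
    · rw [Multiset.countP_eq_zero]
      rintro a ha rfl
      have := hF.lt_of_mem a ha
      have := hF.le_of_mem a ha
      omega
  exact Multiset.eq_zero_of_forall_notMem fun a ha =>
    Multiset.countP_eq_zero.1 (hout a.1) a ha rfl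

/-- Follow arcs of positive flow from `u`: flow entering an interior node has to leave it. -/
theorem exists_path (hF : IsForwardFlow B F) (u : ℕ) (hu : F.countP (·.1 = u) ≠ 0) :
    ∃ C ≤ F, (∀ a ∈ C, u ≤ a.1) ∧ C.countP (·.1 = u) = 1 ∧
      (∀ w, u < w → w < B → C.countP (·.2 = w) = C.countP (·.1 = w)) ∧
      (C.map fun a => a.2 - a.1).sum ≤ B - u := by
  obtain ⟨a, haF, rfl⟩ := Multiset.countP_pos.1 (Nat.pos_of_ne_zero hu)
  have hlt := hF.lt_of_mem a haF
  have hle := hF.le_of_mem a haF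
  by_cases haB : a.2 = B
  · refine ⟨{a}, Multiset.singleton_le.2 haF, by simp, by simp [Multiset.countP_singleton], ?_,
      by simp only [Multiset.map_singleton, Multiset.sum_singleton]; omega⟩
    intro w hw hwB
    simp only [Multiset.countP_singleton]
    split_ifs <;> omega
  have hnext : F.countP (·.1 = a.2) ≠ 0 := by
    rw [← hF.countP_snd_eq_countP_fst a.2 (by omega) (by omega)]
    exact (Multiset.countP_pos_of_mem (p := (·.2 = a.2)) haF rfl).ne'
  obtain ⟨C, hCF, hCge, hCout, hCcons, hClen⟩ := hF.exists_path a.2 hnext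
  have hCfst : ∀ w < a.2, C.countP (·.1 = w) = 0 := fun w hw =>
    Multiset.countP_eq_zero.2 fun b hb hbw => by have := hCge b hb; omega
  have hCsnd : ∀ w ≤ a.2, C.countP (·.2 = w) = 0 := fun w hw =>
    Multiset.countP_eq_zero.2 fun b hb hbw => by
      have := hCge b hb; have := hF.lt_of_mem b (Multiset.mem_of_le hCF hb); omega
  refine ⟨a ::ₘ C, ?_, ?_, ?_, ?_, ?_⟩
  · exact (Multiset.cons_le_of_notMem fun h => by have := hCge a h; omega).2 ⟨haF, hCF⟩
  · intro b hb
    rcases Multiset.mem_cons.1 hb with rfl | hb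
    · exact le_rfl
    · exact hlt.le.trans (hCge b hb)
  · simp [hCfst a.1 hlt]
  · intro w hw hwB
    simp only [Multiset.countP_cons]
    rcases lt_trichotomy w a.2 with h | rfl | h
    · rw [hCfst w h, hCsnd w h.le]; split_ifs <;> omega
    · rw [hCsnd _ le_rfl, hCout]; split_ifs <;> omega
    · rw [hCcons w h hwB]; split_ifs <;> omega
  · simp only [Multiset.map_cons, Multiset.sum_cons]
    omega
termination_by B - u
decreasing_by omega

theorem sub (hF : IsForwardFlow B F) {C : Multiset (ℕ × ℕ)} (hCF : C ≤ F)
    (hC : ∀ u, 0 < u → u < B → C.countP (·.2 = u) = C.countP (·.1 = u)) :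
    IsForwardFlow B (F - C) where
  lt_of_mem a ha := hF.lt_of_mem a (Multiset.mem_of_le tsub_le_self ha)
  le_of_mem a ha := hF.le_of_mem a (Multiset.mem_of_le tsub_le_self ha)
  countP_snd_eq_countP_fst u hu huB := by
    rw [Multiset.countP_sub hCF, Multiset.countP_sub hCF, hF.countP_snd_eq_countP_fst u hu huB,
      hC u hu huB]

theorem exists_decomposition {v : ℕ} (hF : IsForwardFlow B F) (hv : F.countP (·.1 = 0) = v) :
    ∃ W : Fin v → Multiset (ℕ × ℕ),
      (∀ k, ((W k).map fun a => a.2 - a.1).sum ≤ B) ∧ ∑ k, W k = F := by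
  induction v generalizing F with
  | zero => exact ⟨Fin.elim0, fun k => k.elim0, by simp [hF.eq_zero_of_countP_fst_zero hv]⟩
  | succ v ih =>
    obtain ⟨C, hCF, -, hCout, hCcons, hClen⟩ := hF.exists_path 0 (by omega)
    obtain ⟨W, hWlen, hWsum⟩ := ih (hF.sub hCF fun u hu => hCcons u hu)
      (by rw [Multiset.countP_sub hCF, hv, hCout]; rfl)
    refine ⟨Fin.cons C W, fun k => Fin.cases hClen hWlen k, ?_⟩
    rw [Fin.sum_univ_succ, Fin.cons_zero]
    simp only [Fin.cons_succ]
    rw [hWsum, add_tsub_cancel_of_le hCF]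

end IsForwardFlow

theorem exists_injective_of_card_filter_le {α β κ ι : Type*} [Fintype α] [DecidableEq β]
    [DecidableEq κ] [LinearOrder ι] (T : Finset β) (colα : α → κ) (colβ : β → κ) (τ : α → ι)
    (σ : β → ι)
    (h : ∀ a t₀, #{a' | colα a' = colα a ∧ t₀ ≤ τ a'} ≤ #{b ∈ T | colβ b = colα a ∧ t₀ ≤ σ b}) :
    ∃ φ : α → β, Function.Injective φ ∧ ∀ a, φ a ∈ T ∧ colβ (φ a) = colα a ∧ τ a ≤ σ (φ a) := by
  set r : α → Finset β := fun a => {b ∈ T | colβ b = colα a ∧ τ a ≤ σ b}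
  suffices hall : ∀ S : Finset α, #S ≤ #(S.biUnion r) by
    obtain ⟨φ, hφ, hφr⟩ := (all_card_le_biUnion_card_iff_exists_injective r).1 hall
    exact ⟨φ, hφ, fun a => by simpa [r, and_assoc] using hφr a⟩
  intro S
  have hclass : ∀ c ∈ S.image colα, #{a ∈ S | colα a = c} ≤ #{b ∈ S.biUnion r | colβ b = c} := by
    intro c hc
    -- Hall's condition for one colour class is the dominance at its lowest level `τ a₀`.
    obtain ⟨a, haS, rfl⟩ := mem_image.1 hc
    obtain ⟨a₀, ha₀, hmin⟩ :=
      exists_min_image {a' ∈ S | colα a' = colα a} τ ⟨a, mem_filter.2 ⟨haS, rfl⟩⟩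
    obtain ⟨ha₀S, hca₀⟩ := mem_filter.1 ha₀
    rw [← hca₀] at hmin ⊢
    calc #{a ∈ S | colα a = colα a₀}
        ≤ #{a' | colα a' = colα a₀ ∧ τ a₀ ≤ τ a'} :=
          card_le_card fun a ha => by simp_all
      _ ≤ #(r a₀) := h a₀ (τ a₀)
      _ ≤ #{b ∈ S.biUnion r | colβ b = colα a₀} :=
          card_le_card fun b hb => by
            simp only [r, mem_filter, mem_biUnion] at hb ⊢
            exact ⟨⟨a₀, ha₀S, hb⟩, hb.2.1⟩
  calc #S = ∑ c ∈ S.image colα, #{a ∈ S | colα a = c} := card_eq_sum_card_image colα S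
    _ ≤ ∑ c ∈ S.image colα, #{b ∈ S.biUnion r | colβ b = c} := sum_le_sum hclass
    _ = #{b ∈ S.biUnion r | colβ b ∈ S.image colα} := sum_card_fiberwise_eq_card_filter _ _ _
    _ ≤ #(S.biUnion r) := card_filter_le _ _

theorem exists_packing_of_card_le {α β ι : Type*} [Fintype α] [Fintype β] [DecidableEq β]
    [LinearOrder ι] (s : α → ℕ) (τ : α → ι) (σ : β → ι) (M : β → Multiset ℕ)
    (hdom : ∀ j t₀, #{i | s i = s j ∧ t₀ ≤ τ i} ≤ ∑ b with t₀ ≤ σ b, (M b).count (s j)) :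
    ∃ key : α → β, (∀ b, ∑ j with key j = b, s j ≤ (M b).sum) ∧ ∀ j, τ j ≤ σ (key j) := by
  -- slot `⟨b, (c, i)⟩` is the `i`-th copy of the size `c` in `M b`
  set T : Finset (Σ _ : β, ℕ × ℕ) := univ.sigma fun b => (M b).toEnumFinset
  have hT : ∀ c t₀, #{x ∈ T | x.2.1 = c ∧ t₀ ≤ σ x.1} = ∑ b with t₀ ≤ σ b, (M b).count c := by
    intro c t₀
    rw [show ({x ∈ T | x.2.1 = c ∧ t₀ ≤ σ x.1} : Finset _)
        = ({b | t₀ ≤ σ b} : Finset β).sigma fun b => {x ∈ (M b).toEnumFinset | x.1 = c} by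
      ext ⟨b, x⟩
      simp only [T, mem_filter, mem_sigma, mem_univ, true_and]
      tauto]
    simp
  obtain ⟨φ, hφ, hφT⟩ := exists_injective_of_card_filter_le T s (·.2.1) τ (σ ·.1)
    fun j t₀ => (hT _ _).symm ▸ hdom j t₀
  refine ⟨fun j => (φ j).1, fun b => ?_, fun j => (hφT j).2.2⟩
  have hinj : Set.InjOn (fun j => (φ j).2) ({j | (φ j).1 = b} : Finset α) := by
    intro i hi j hj hij
    simp only [coe_filter, mem_univ, true_and, Set.mem_ofPred] at hi hj
    exact hφ (Sigma.ext (hi.trans hj.symm) (heq_of_eq hij))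
  calc ∑ j with (φ j).1 = b, s j = ∑ j with (φ j).1 = b, (φ j).2.1 :=
        sum_congr rfl fun j _ => (hφT j).2.1.symm
    _ = ∑ x ∈ ({j | (φ j).1 = b} : Finset α).image (fun j => (φ j).2), x.1 := (sum_image hinj).symm
    _ ≤ ∑ x ∈ (M b).toEnumFinset, x.1 := by
        refine sum_le_sum_of_subset fun x hx => ?_
        obtain ⟨j, hj, rfl⟩ := mem_image.1 hx
        obtain ⟨hφj, -⟩ := (hφT j)
        rw [← (mem_filter.1 hj).2]
        simpa [T] using hφj
    _ = (M b).sum := (Multiset.sum_eq_sum_toEnumFinset _).symm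

theorem exists_finpartition_of_assignment {α β : Type*} [Fintype α] [DecidableEq α]
    [Fintype β] [DecidableEq β] (key : α → β) (s p : α → ℕ) (cap : ℕ) (cost : β → ℕ)
    (hcap : ∀ b, ∑ j with key j = b, s j ≤ cap) (hcost : ∀ j, p j ≤ cost (key j)) :
    ∃ Q : Finpartition (univ : Finset α),
      (∀ S ∈ Q.parts, ∑ j ∈ S, s j ≤ cap) ∧ ∑ S ∈ Q.parts, S.sup p ≤ ∑ b, cost b := by
  classical
  set fiber : β → Finset α := fun b => {j | key j = b}
  have hparts : (Finpartition.ofSetoid (Setoid.ker key)).parts = (univ.image key).image fiber := by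
    rw [image_image]
    refine image_congr fun a _ => ?_
    ext j
    simp [fiber, Setoid.ker_def, eq_comm]
  refine ⟨Finpartition.ofSetoid (Setoid.ker key), ?_, ?_⟩
  · rw [hparts]
    intro S hS
    obtain ⟨b, -, rfl⟩ := mem_image.1 hS
    exact hcap b
  · rw [hparts]
    calc ∑ S ∈ (univ.image key).image fiber, S.sup p
        ≤ ∑ b ∈ univ.image key, (fiber b).sup p := sum_image_le_of_nonneg fun _ _ => Nat.zero_le _
      _ ≤ ∑ b ∈ univ.image key, cost b :=
          sum_le_sum fun b _ => Finset.sup_le fun j hj => (mem_filter.1 hj).2 ▸ hcost j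
      _ ≤ ∑ b, cost b := sum_le_sum_of_subset (subset_univ _)

theorem sum_Ici_le_of_sub_eq {δ : ℕ} (N F : Fin δ → ℕ) (z : ℕ → ℕ) (hz : z δ = 0)
    (h : ∀ t : Fin δ, (N t : ℤ) - F t = z (t + 1) - z t) (t₀ : Fin δ) :
    ∑ t ∈ Ici t₀, N t ≤ ∑ t ∈ Ici t₀, F t := by
  have htel : ∑ t ∈ Ici t₀, ((N t : ℤ) - F t) = z δ - z t₀ :=
    calc ∑ t ∈ Ici t₀, ((N t : ℤ) - F t) = ∑ t ∈ Ici t₀, ((z (t + 1) : ℤ) - z t) :=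
          sum_congr rfl fun t _ => h t
      _ = ∑ i ∈ Ico (t₀ : ℕ) δ, ((z (i + 1) : ℤ) - z i) := by
          rw [← Fin.map_valEmbedding_Ici, sum_map]; rfl
      _ = z δ - z t₀ := sum_Ico_sub (fun i => (z i : ℤ)) t₀.2.le
  rw [sum_sub_distrib, hz] at htel
  zify
  omega

namespace FlowFeasible

variable {n B δ : ℕ} {s p : Fin n → ℕ} {P : Fin δ → ℕ} {f y : ℕ × ℕ → Fin δ → ℕ} {v : Fin δ → ℕ}
  {z : ℕ → ℕ → ℕ}

/-- The bins `⟨t, k⟩` are the paths of a path decomposition of the flow of class `t`, each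
recorded by the multiset of its arc lengths. -/
theorem exists_bins (hfeas : FlowFeasible n B s p δ P f y v z) :
    ∃ M : (Σ t : Fin δ, Fin (v t)) → Multiset ℕ, (∀ b, (M b).sum ≤ B) ∧
      ∀ t c, ∑ a ∈ flowAJ n B s with a.2 - a.1 = c, f a t ≤ ∑ k, (M ⟨t, k⟩).count c := by
  classical
  obtain ⟨-, -, -, -, hsrc, -, hcons, -⟩ := hfeas
  set F : Fin δ → Multiset (ℕ × ℕ) := fun t =>
    ∑ a ∈ flowAJ n B s, f a t • {a} + ∑ a ∈ flowAL B, y a t • {a}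
  have hcount : ∀ t (q : ℕ × ℕ → Prop) [DecidablePred q],
      (F t).countP q = ∑ a ∈ flowAJ n B s with q a, f a t + ∑ a ∈ flowAL B with q a, y a t := by
    intro t q _
    simp only [F, Multiset.countP_add, Multiset.countP_sum_nsmul_singleton]
  have hF : ∀ t, IsForwardFlow B (F t) := by
    intro t
    have hmem : ∀ a ∈ F t, a.1 < a.2 ∧ a.2 ≤ B := by
      intro a ha
      simp only [F, Multiset.mem_add, Multiset.mem_sum, Multiset.mem_nsmul,
        Multiset.mem_singleton] at ha
      rcases ha with ⟨b, hb, -, rfl⟩ | ⟨b, hb, -, rfl⟩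
      · simp only [flowAJ, mem_filter, mem_product, mem_range] at hb; omega
      · simp only [flowAL, mem_filter, mem_product, mem_range] at hb; omega
    refine ⟨fun a ha => (hmem a ha).1, fun a ha => (hmem a ha).2, fun u hu huB => ?_⟩
    rw [hcount, hcount]
    exact hcons t u hu huB
  choose W hWlen hWsum using fun t => (hF t).exists_decomposition ((hcount t _).trans (hsrc t))
  refine ⟨fun b => (W b.1 b.2).map fun a => a.2 - a.1, fun b => hWlen _ _, fun t c => ?_⟩
  calc ∑ a ∈ flowAJ n B s with a.2 - a.1 = c, f a t
      ≤ (F t).countP (fun a => a.2 - a.1 = c) := by rw [hcount]; exact le_self_add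
    _ = ∑ k, ((W t k).map fun a => a.2 - a.1).count c := by
        rw [← hWsum t, ← Multiset.coe_countPAddMonoidHom, map_sum]
        simp [Multiset.count_map, Multiset.countP_eq_card_filter, eq_comm]

theorem card_le_sum_flow (hfeas : FlowFeasible n B s p δ P f y v z) (hP : StrictMono P)
    {τ : Fin n → Fin δ} (hτ : ∀ j, p j = P (τ j)) {c : ℕ} (hc : 1 ≤ c) (hcB : c ≤ B)
    (t₀ : Fin δ) :
    #{i | s i = c ∧ t₀ ≤ τ i} ≤ ∑ t ∈ Ici t₀, ∑ a ∈ flowAJ n B s with a.2 - a.1 = c, f a t := by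
  obtain ⟨-, -, -, hzδ, -, -, -, hbal⟩ := hfeas
  have hNT : ∀ t, #{i | s i = c ∧ p i = P t} = #{i | s i = c ∧ τ i = t} := by
    intro t; simp_rw [hτ, hP.injective.eq_iff]
  calc #{i | s i = c ∧ t₀ ≤ τ i} = ∑ t ∈ Ici t₀, #{i | s i = c ∧ τ i = t} := by
        simpa only [filter_filter, mem_Ici] using
          (sum_card_fiberwise_eq_card_filter {i | s i = c} (Ici t₀) τ).symm
    _ ≤ _ := sum_Ici_le_of_sub_eq _ _ (z c) (hzδ c) (fun t => by
        rw [← hNT]; push_cast; exact hbal t c hc hcB) t₀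

end FlowFeasible

theorem flow_to_schedule_general (n B : ℕ)
    (s p : Fin n → ℕ) (hs : ∀ j, 1 ≤ s j ∧ s j ≤ B)
    (δ : ℕ) (P : Fin δ → ℕ) (hPmono : StrictMono P)
    (hPall : ∀ j, ∃ t, p j = P t)
    (f y : ℕ × ℕ → Fin δ → ℕ) (v : Fin δ → ℕ) (z : ℕ → ℕ → ℕ)
    (hfeas : FlowFeasible n B s p δ P f y v z) :
    ∃ Q : Finpartition (univ : Finset (Fin n)),
      (∀ S ∈ Q.parts, ∑ j ∈ S, s j ≤ B) ∧
      ∑ S ∈ Q.parts, S.sup p ≤ ∑ t, P t * v t := by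
  classical
  choose τ hτ using hPall
  obtain ⟨M, hMcap, hMcover⟩ := hfeas.exists_bins
  obtain ⟨key, hkey, hτkey⟩ := exists_packing_of_card_le s τ Sigma.fst M fun j t₀ =>
    calc #{i | s i = s j ∧ t₀ ≤ τ i}
        ≤ ∑ t ∈ Ici t₀, ∑ a ∈ flowAJ n B s with a.2 - a.1 = s j, f a t :=
          hfeas.card_le_sum_flow hPmono hτ (hs j).1 (hs j).2 t₀
      _ ≤ ∑ t ∈ Ici t₀, ∑ k, (M ⟨t, k⟩).count (s j) := sum_le_sum fun t _ => hMcover t (s j)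
      _ = ∑ b with t₀ ≤ b.1, (M b).count (s j) := by
          rw [← filter_le_eq_Ici, sum_filter, sum_filter, Fintype.sum_sigma]
          exact sum_congr rfl fun t _ => by split_ifs <;> simp
  obtain ⟨Q, hQcap, hQcost⟩ := exists_finpartition_of_assignment key s p B (fun b => P b.1)
    (fun b => (hkey b).trans (hMcap b)) fun j => (hτ j).trans_le (hPmono.monotone (hτkey j))
  refine ⟨Q, hQcap, hQcost.trans_eq ?_⟩
  simp [Fintype.sum_sigma, mul_comm]

/-- For every feasible solution `(f, y, v, z)` of (FLOW), there exists a
capacity-feasible schedule of the instance whose makespan is at most the objective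
value `∑ t, P t * v t`.  Schedules are `Finpartition`s of the job set; the makespan is
`∑ S ∈ Q.parts, S.sup p`; `P : Fin δ → ℕ` enumerates, strictly increasingly, exactly
the distinct values among the processing times `p j`. -/
theorem flow_to_schedule (n B : ℕ) (hn : 1 ≤ n) (hB : 1 ≤ B)
    (s p : Fin n → ℕ) (hs : ∀ j, 1 ≤ s j ∧ s j ≤ B) (hp : ∀ j, 1 ≤ p j)
    (δ : ℕ) (P : Fin δ → ℕ) (hPmono : StrictMono P)
    (hPmem : ∀ t, ∃ j, p j = P t) (hPall : ∀ j, ∃ t, p j = P t)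
    (f y : ℕ × ℕ → Fin δ → ℕ) (v : Fin δ → ℕ) (z : ℕ → ℕ → ℕ)
    (hfeas : FlowFeasible n B s p δ P f y v z) :
    ∃ Q : Finpartition (univ : Finset (Fin n)),
      (∀ S ∈ Q.parts, ∑ j ∈ S, s j ≤ B) ∧
      ∑ S ∈ Q.parts, S.sup p ≤ ∑ t, P t * v t :=
  flow_to_schedule_general n B s p hs δ P hPmono hPall f y v z hfeas
end

section
/- Let B ≥ 1 be an integer and let f : {0,…,B} × {0,…,B} → ℕ satisfy f(i,j) = 0 whenever i ≥ j, together with flow conservation at every interior node: for every u with 0 < u < B, Σ_{i<u} f(i,u) = Σ_{j>u} f(u,j). Then for every pair (i,j) with 1 ≤ i < j ≤ B and f(i,j) > 0, there exist m ≥ 1 and nodes 0 = u_0 < u_1 < … < u_m = i with f(u_r, u_{r+1}) > 0 for every 0 ≤ r < m; i.e., the tail of every positively-flowed arc is reachable from node 0 along positively-flowed arcs. -/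
open Finset

/-!
Among the interior nodes with positive outflow, conservation gives each one a positive inflow, hence
a positively-flowed arc `(k, u)` with `k < u`; either `k = 0` or `k` is again an interior node with
positive outflow. Since `<` is well founded, following such arcs backwards from `i` reaches `0`.
-/

namespace Relation

variable {α : Type*} {r : α → α → Prop}

theorem TransGen.exists_seq {a b : α} (h : TransGen r a b) :
    ∃ (m : ℕ) (u : ℕ → α), 1 ≤ m ∧ u 0 = a ∧ u m = b ∧ ∀ k < m, r (u k) (u (k + 1)) := by
  induction h using TransGen.head_induction_on with
  | single hab => exact ⟨1, fun | 0 => _ | _ + 1 => _, le_rfl, rfl, rfl, by simpa using hab⟩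
  | @head a c hac _ ih =>
    obtain ⟨m, u, -, hu0, hum, hstep⟩ := ih
    refine ⟨m + 1, fun | 0 => a | k + 1 => u k, by omega, rfl, hum, ?_⟩
    rintro (_ | k) hk
    · simpa [hu0] using hac
    · exact hstep k (by omega)

theorem transGen_of_forall_exists_pred (hwf : WellFounded r) {P : α → Prop} {s : α}
    (hpred : ∀ x, P x → ∃ y, r y x ∧ (y = s ∨ P y)) {x : α} (hx : P x) : TransGen r s x := by
  induction x using hwf.induction with
  | _ x ih =>
    obtain ⟨y, hyx, rfl | hy⟩ := hpred x hx
    · exact .single hyx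
    · exact (ih y hyx hy).tail hyx

end Relation

theorem exists_pos_inflow_of_pos_outflow {α : Type*} [Fintype α] {f : α → α → ℕ} {u v : α}
    (hcons : ∑ i, f i u = ∑ j, f u j) (huv : 0 < f u v) : ∃ k, 0 < f k u := by
  have hout : 0 < ∑ j, f u j := huv.trans_le (single_le_sum (fun _ _ ↦ Nat.zero_le _) (mem_univ v))
  obtain ⟨k, -, hk⟩ := exists_ne_zero_of_sum_ne_zero (hcons ▸ hout).ne'
  exact ⟨k, Nat.pos_of_ne_zero hk⟩

theorem positively_flowed_arcs_reachable_general (B : ℕ)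
    (f : Fin (B + 1) → Fin (B + 1) → ℕ)
    (hzero : ∀ i j : Fin (B + 1), j ≤ i → f i j = 0)
    (hcons : ∀ u : Fin (B + 1), 0 < u.val → u.val < B →
      ∑ i, f i u = ∑ j, f u j) :
    ∀ i j : Fin (B + 1), 1 ≤ i.val → i < j → 0 < f i j →
      ∃ (m : ℕ) (u : ℕ → Fin (B + 1)), 1 ≤ m ∧ u 0 = 0 ∧ u m = i ∧
        ∀ r < m, u r < u (r + 1) ∧ 0 < f (u r) (u (r + 1)) := by
  intro i j hi hij hpos
  let R : Fin (B + 1) → Fin (B + 1) → Prop := fun a b ↦ a < b ∧ 0 < f a b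
  let P : Fin (B + 1) → Prop := fun x ↦ 0 < x.val ∧ x.val < B ∧ ∃ j, 0 < f x j
  have hpred : ∀ x, P x → ∃ y, R y x ∧ (y = 0 ∨ P y) := by
    rintro x ⟨hx0, hxB, j, hxj⟩
    obtain ⟨k, hk⟩ := exists_pos_inflow_of_pos_outflow (hcons x hx0 hxB) hxj
    have hkx : k < x := lt_of_not_ge fun hxk ↦ hk.ne' (hzero k x hxk)
    refine ⟨k, ⟨hkx, hk⟩, ?_⟩
    rcases Nat.eq_zero_or_pos k.val with hk0 | hk0
    · exact .inl (Fin.ext hk0)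
    · exact .inr ⟨hk0, by omega, x, hk⟩
  exact (Relation.transGen_of_forall_exists_pred (Subrelation.wf And.left wellFounded_lt) hpred
    ⟨hi, by omega, j, hpos⟩).exists_seq

/-- Correctness of Rule 1 of the paper: let `f` be a nonnegative integer flow on the
nodes `{0,…,B}` with `f i j = 0` whenever `i ≥ j`, satisfying flow conservation at every
interior node `0 < u < B`.  Then for every arc `(i,j)` with `1 ≤ i < j ≤ B` carrying
positive flow, there exist `m ≥ 1` and nodes `0 = u 0 < u 1 < … < u m = i` with
`f (u r) (u (r+1)) > 0` for every `r < m`; i.e. the tail of every positively-flowed arc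
is reachable from node `0` along positively-flowed arcs. -/
theorem positively_flowed_arcs_reachable (B : ℕ) (hB : 1 ≤ B)
    (f : Fin (B + 1) → Fin (B + 1) → ℕ)
    (hzero : ∀ i j : Fin (B + 1), j ≤ i → f i j = 0)
    (hcons : ∀ u : Fin (B + 1), 0 < u.val → u.val < B →
      ∑ i, f i u = ∑ j, f u j) :
    ∀ i j : Fin (B + 1), 1 ≤ i.val → i < j → 0 < f i j →
      ∃ (m : ℕ) (u : ℕ → Fin (B + 1)), 1 ≤ m ∧ u 0 = 0 ∧ u m = i ∧
        ∀ r < m, u r < u (r + 1) ∧ 0 < f (u r) (u (r + 1)) :=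
  positively_flowed_arcs_reachable_general B f hzero hcons
end
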